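/- arXiv:1802.08539 — 9 statements merged into one kernel-verified Lean document; each statement's English description precedes it below -/
import Mathlib

section
/- Let X be Polish, H ⊆ C_b(X) a linear subspace containing constants, μ0 a Borel probability measure, φ(f) = inf{∫ h dμ0 : h ∈ H, h ≥ f} continuous from above, and Q = {μ : ∫ h dμ = ∫ h dμ0 for all h ∈ H}, so that φ(f) = max_{μ∈Q} ∫ f dμ. Let β be a penalty function with conjugate β*, γ > 0, θ a Borel probability measure, and φ_{θ,γ}(f) = inf_{h∈H}{∫ h dμ0 + ∫ β_γ(f−h) dθ}. Fix f ∈ C_b(X), ε > 0, and let μ_ε ∈ Q be an ε-optimizer of sup_{μ∈Q} ∫ f dμ (i.e. ∫ f dμ_ε ≥ φ(f) − ε) with μ_ε ≪ θ and ∫ β*(dμ_ε/dθ) dθ < ∞. Then φ(f) ≤ φ_{θ,γ}(f) + (1/γ) ∫ β*(dμ_ε/dθ) dθ + ε. -/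
open MeasureTheory BoundedContinuousFunction Filter Topology

/-- Convex conjugate `β*(y) = sup_{x ∈ ℝ} (x*y - β x)`. -/
noncomputable def betaConj (β : ℝ → ℝ) (y : ℝ) : ℝ :=
  sSup {z : ℝ | ∃ x : ℝ, z = x * y - β x}

/-- The superhedging functional `φ(f) = inf {∫ h dμ0 : h ∈ H, h ≥ f}`. -/
noncomputable def phi {X : Type*} [TopologicalSpace X] [MeasurableSpace X]
    (μ0 : Measure X) (H : Set (X →ᵇ ℝ)) (f : X →ᵇ ℝ) : ℝ :=
  sInf {r : ℝ | ∃ h ∈ H, (∀ x, f x ≤ h x) ∧ r = ∫ x, h x ∂μ0}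

/-- The regularized (penalized) superhedging functional
`φ_{θ,γ}(f) = inf_{h ∈ H} { ∫ h dμ0 + ∫ β_γ(f - h) dθ }` with `β_γ(x) = β(γ x)/γ`. -/
noncomputable def phiReg {X : Type*} [TopologicalSpace X] [MeasurableSpace X]
    (μ0 θ : Measure X) (H : Set (X →ᵇ ℝ)) (β : ℝ → ℝ) (γ : ℝ) (f : X →ᵇ ℝ) : ℝ :=
  sInf {r : ℝ | ∃ h ∈ H, r = (∫ x, h x ∂μ0) + ∫ x, β (γ * (f x - h x)) / γ ∂θ}

/-- `μ ∈ Q` iff `μ` is a Borel probability measure with `∫ h dμ = ∫ h dμ0` for all `h ∈ H`. -/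
def memQ {X : Type*} [TopologicalSpace X] [MeasurableSpace X]
    (μ0 : Measure X) (H : Set (X →ᵇ ℝ)) (μ : Measure X) : Prop :=
  IsProbabilityMeasure μ ∧ ∀ h ∈ H, ∫ x, h x ∂μ = ∫ x, h x ∂μ0


/-- Young's inequality half: `x*y - β x ≤ β*(y)` when `y ≥ 0` and `β` is nonnegative
and superlinear (so the defining set of the sup is bounded above). -/
lemma le_betaConj (β : ℝ → ℝ) (hβ0 : ∀ x, 0 ≤ β x)
    (hβsl : Filter.Tendsto (fun x => β x / x) Filter.atTop Filter.atTop)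
    {y : ℝ} (hy : 0 ≤ y) (x : ℝ) : x * y - β x ≤ betaConj β y := by
  have hbdd : BddAbove {z : ℝ | ∃ x : ℝ, z = x * y - β x} := by
    obtain ⟨M, hM⟩ := (hβsl.eventually_ge_atTop (y + 1)).exists_forall_of_atTop
    refine ⟨(max M 1) * y, ?_⟩
    rintro z ⟨u, rfl⟩
    rcases le_or_gt u (max M 1) with hu | hu
    · have : u * y ≤ (max M 1) * y := mul_le_mul_of_nonneg_right hu hy
      have := hβ0 u
      linarith
    · have hu0 : (0 : ℝ) < u := lt_of_lt_of_le (by norm_num) (le_of_lt (lt_of_le_of_lt (le_max_right M 1) hu))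
      have hβu : y + 1 ≤ β u / u := hM u (le_of_lt (lt_of_le_of_lt (le_max_left M 1) hu))
      have : (y + 1) * u ≤ β u := (le_div_iff₀ hu0).mp hβu
      have h1 : u * y - β u ≤ -u := by nlinarith
      have h2 : (0:ℝ) ≤ (max M 1) * y := mul_nonneg (le_trans zero_le_one (le_max_right M 1)) hy
      linarith
  exact le_csSup hbdd ⟨x, rfl⟩

/-- If `μ_ε ∈ Q` is an `ε`-optimizer of `sup_{μ ∈ Q} ∫ f dμ` with `μ_ε ≪ θ`
and `∫ β*(dμ_ε/dθ) dθ < ∞`, then `φ(f) ≤ φ_{θ,γ}(f) + (1/γ) ∫ β*(dμ_ε/dθ) dθ + ε`. -/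
theorem statement3 {X : Type*} [TopologicalSpace X] [PolishSpace X]
    [MeasurableSpace X] [BorelSpace X]
    (μ0 θ : Measure X) [IsProbabilityMeasure μ0] [IsProbabilityMeasure θ]
    (H : Submodule ℝ (X →ᵇ ℝ))
    (hconst : ∀ c : ℝ, BoundedContinuousFunction.const X c ∈ H)
    (hca : ∀ fn : ℕ → X →ᵇ ℝ, (∀ x, Antitone (fun n => fn n x)) →
      (∀ x, Tendsto (fun n => fn n x) atTop (𝓝 (0 : ℝ))) →
      Tendsto (fun n => phi μ0 (H : Set (X →ᵇ ℝ)) (fn n)) atTop (𝓝 (0 : ℝ)))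
    (β : ℝ → ℝ) (hβ0 : ∀ x, 0 ≤ β x) (hβdiff : Differentiable ℝ β)
    (hβmono : Monotone β) (hβconv : ConvexOn ℝ Set.univ β)
    (hβsl : Tendsto (fun x => β x / x) atTop atTop)
    (γ : ℝ) (hγ : 0 < γ) (f : X →ᵇ ℝ)
    (ε : ℝ) (hε : 0 < ε)
    (με : Measure X) (hμεQ : memQ μ0 (H : Set (X →ᵇ ℝ)) με)
    (hμεopt : phi μ0 (H : Set (X →ᵇ ℝ)) f - ε ≤ ∫ x, f x ∂με)
    (hμεac : με ≪ θ)
    (hμεint : Integrable (fun x => betaConj β ((με.rnDeriv θ x).toReal)) θ) :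
    phi μ0 (H : Set (X →ᵇ ℝ)) f ≤
      phiReg μ0 θ (H : Set (X →ᵇ ℝ)) β γ f +
        (1 / γ) * (∫ x, betaConj β ((με.rnDeriv θ x).toReal) ∂θ) + ε := by
  obtain ⟨hμεprob, hμεH⟩ := hμεQ
  haveI : IsProbabilityMeasure με := hμεprob
  set D : X → ℝ := fun x => (με.rnDeriv θ x).toReal with hDdef
  have hDnn : ∀ x, 0 ≤ D x := fun x => ENNReal.toReal_nonneg
  have hDmeas : Measurable D := (Measure.measurable_rnDeriv με θ).ennreal_toReal
  have hDint : Integrable D θ := Measure.integrable_toReal_rnDeriv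
  set I : ℝ := ∫ x, betaConj β (D x) ∂θ with hIdef
  -- main inequality for each h ∈ H
  have key : ∀ r ∈ {r : ℝ | ∃ h ∈ (H : Set (X →ᵇ ℝ)),
      r = (∫ x, h x ∂μ0) + ∫ x, β (γ * (f x - h x)) / γ ∂θ},
      phi μ0 (H : Set (X →ᵇ ℝ)) f - (1 / γ) * I - ε ≤ r := by
    rintro r ⟨h, hh, rfl⟩
    -- split ∫ f dμε
    have hsub : ∫ x, (f x - h x) ∂με = (∫ x, f x ∂με) - ∫ x, h x ∂με :=
      integral_sub (f.integrable με) (h.integrable με)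
    have hsplit : ∫ x, f x ∂με = (∫ x, h x ∂μ0) + ∫ x, (f x - h x) ∂με := by
      rw [hsub, hμεH h hh]; ring
    -- change of measure
    have hcm : ∫ x, (f x - h x) ∂με = ∫ x, D x * (f x - h x) ∂θ := by
      rw [← integral_rnDeriv_smul hμεac (f := fun x => f x - h x)]
      simp [hDdef, smul_eq_mul]
    -- pointwise Young
    have hpt : ∀ x, D x * (f x - h x) ≤
        β (γ * (f x - h x)) / γ + betaConj β (D x) / γ := by
      intro x
      have hy := le_betaConj β hβ0 hβsl (hDnn x) (γ * (f x - h x))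
      have hγ' : (0:ℝ) < γ := hγ
      rw [← add_div, le_div_iff₀ hγ']
      nlinarith
    -- integrability of RHS terms
    have hfhcont : Continuous fun x => γ * (f x - h x) :=
      (continuous_const.mul ((f.continuous.sub h.continuous)))
    have hβcont : Continuous β := hβdiff.continuous
    have hg1meas : AEStronglyMeasurable (fun x => β (γ * (f x - h x)) / γ) θ :=
      ((hβcont.comp hfhcont).div_const γ).aestronglyMeasurable
    have hbound : ∀ x, ‖β (γ * (f x - h x)) / γ‖ ≤ β (γ * (‖f‖ + ‖h‖)) / γ := by
      intro x
      have h1 : γ * (f x - h x) ≤ γ * (‖f‖ + ‖h‖) := by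
        have := (f - h).norm_coe_le_norm x
        have h2 : ‖f - h‖ ≤ ‖f‖ + ‖h‖ := norm_sub_le f h
        have h3 : f x - h x ≤ ‖f‖ + ‖h‖ := by
          have := abs_le.mp (le_trans this h2 : |(f - h) x| ≤ ‖f‖ + ‖h‖)
          simpa using this.2
        exact mul_le_mul_of_nonneg_left h3 (le_of_lt hγ)
      have h0 : 0 ≤ β (γ * (f x - h x)) / γ := div_nonneg (hβ0 _) (le_of_lt hγ)
      rw [Real.norm_eq_abs, abs_of_nonneg h0]
      exact div_le_div_of_nonneg_right (hβmono h1) hγ.le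
    have hg1int : Integrable (fun x => β (γ * (f x - h x)) / γ) θ :=
      (integrable_const (β (γ * (‖f‖ + ‖h‖)) / γ)).mono' hg1meas
        (Filter.Eventually.of_forall hbound)
    have hg2int : Integrable (fun x => betaConj β (D x) / γ) θ := hμεint.div_const γ
    have hlhsint : Integrable (fun x => D x * (f x - h x)) θ := by
      have : Integrable (fun x => (f x - h x) * D x) θ := by
        apply hDint.bdd_mul (c := ‖f‖ + ‖h‖) ((f.continuous.sub h.continuous).aestronglyMeasurable)
        refine Filter.Eventually.of_forall (fun x => ?_)
        have := (f - h).norm_coe_le_norm x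
        have h2 : ‖f - h‖ ≤ ‖f‖ + ‖h‖ := norm_sub_le f h
        simpa using le_trans this h2
      simpa [mul_comm] using this
    -- integrate the pointwise bound
    have hint : ∫ x, D x * (f x - h x) ∂θ ≤
        (∫ x, β (γ * (f x - h x)) / γ ∂θ) + ∫ x, betaConj β (D x) / γ ∂θ := by
      rw [← integral_add hg1int hg2int]
      exact integral_mono hlhsint (hg1int.add hg2int) hpt
    have hconj : ∫ x, betaConj β (D x) / γ ∂θ = (1 / γ) * I := by
      rw [hIdef, integral_div]
      ring
    have := hμεopt
    rw [hsplit, hcm] at this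
    rw [hconj] at hint
    linarith
  have hne : {r : ℝ | ∃ h ∈ (H : Set (X →ᵇ ℝ)),
      r = (∫ x, h x ∂μ0) + ∫ x, β (γ * (f x - h x)) / γ ∂θ}.Nonempty :=
    ⟨_, 0, H.zero_mem, rfl⟩
  have hfinal := le_csInf hne key
  rw [phiReg]
  simp only [hIdef, hDdef] at hfinal
  linarith
end

section
/- Let X be Polish, H ⊆ C_b(X) a linear subspace containing constants, μ0 a Borel probability measure, Q = {μ : ∫ h dμ = ∫ h dμ0 for all h ∈ H}, β a differentiable nondecreasing convex penalty function with β(x)/x → ∞, γ > 0, β_γ(x) = β(γx)/γ, and θ a Borel probability measure. Fix f ∈ C_b(X) and suppose ĥ ∈ H minimizes h ↦ ∫ h dμ0 + ∫ β_γ(f − h) dθ over H, and that the Borel measure μ̂ with density dμ̂/dθ = β_γ′(f − ĥ) with respect to θ is a probability measure (the first-order condition). Then μ̂ ∈ Q; that is, ∫ h dμ̂ = ∫ h dμ0 for every h ∈ H. -/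
open MeasureTheory BoundedContinuousFunction Filter Topology

/-- The derivative of a monotone differentiable convex function is nonnegative. -/
lemma aux_deriv_nonneg {β : ℝ → ℝ} (hβdiff : Differentiable ℝ β) (hβmono : Monotone β)
    (hβconv : ConvexOn ℝ Set.univ β) (u : ℝ) : 0 ≤ deriv β u := by
  have h1 : slope β (u - 1) u ≤ deriv β u :=
    hβconv.slope_le_deriv (Set.mem_univ _) (Set.mem_univ _) (by linarith) (hβdiff u)
  have h2 : 0 ≤ slope β (u - 1) u := by
    rw [slope_def_field]
    apply div_nonneg _ (by linarith)
    have := hβmono (show (u - 1 : ℝ) ≤ u by linarith)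
    linarith
  linarith

/-- The derivative of a differentiable convex function is monotone. -/
lemma aux_deriv_mono {β : ℝ → ℝ} (hβdiff : Differentiable ℝ β)
    (hβconv : ConvexOn ℝ Set.univ β) : Monotone (deriv β) := by
  have h := hβconv.monotoneOn_deriv (fun x _ => hβdiff x)
  exact fun u v huv => h (Set.mem_univ _) (Set.mem_univ _) huv

/-- Key step: the variational inequality implies the first-order inequality. -/
lemma aux_key {X : Type*} [TopologicalSpace X] [MeasurableSpace X] [OpensMeasurableSpace X]
    (μ0 θ : Measure X) [IsProbabilityMeasure μ0] [IsProbabilityMeasure θ]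
    (β : ℝ → ℝ) (hβ0 : ∀ x, 0 ≤ β x) (hβdiff : Differentiable ℝ β)
    (hβmono : Monotone β) (hβconv : ConvexOn ℝ Set.univ β)
    (γ : ℝ) (hγ : 0 < γ) (f hhat h' : X →ᵇ ℝ)
    (hineq : ∀ t : ℝ, 0 < t → t ≤ 1 →
      (∫ x, β (γ * (f x - hhat x)) / γ ∂θ) ≤
        t * (∫ x, h' x ∂μ0) + ∫ x, β (γ * (f x - hhat x) - γ * t * h' x) / γ ∂θ) :
    ∫ x, deriv β (γ * (f x - hhat x)) * h' x ∂θ ≤ ∫ x, h' x ∂μ0 := by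
  set a : X → ℝ := fun x => γ * (f x - hhat x) with ha_def
  have ha_cont : Continuous a := continuous_const.mul (f.continuous.sub hhat.continuous)
  set K : ℝ := γ * (‖f‖ + ‖hhat‖ + ‖h'‖) with hK_def
  have hd0 : ∀ u, 0 ≤ deriv β u := aux_deriv_nonneg hβdiff hβmono hβconv
  have hdm : Monotone (deriv β) := aux_deriv_mono hβdiff hβconv
  have hbf : ∀ x, |f x| ≤ ‖f‖ := fun x => by
    have := f.norm_coe_le_norm x; rwa [Real.norm_eq_abs] at this
  have hbh : ∀ x, |hhat x| ≤ ‖hhat‖ := fun x => by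
    have := hhat.norm_coe_le_norm x; rwa [Real.norm_eq_abs] at this
  have hbh' : ∀ x, |h' x| ≤ ‖h'‖ := fun x => by
    have := h'.norm_coe_le_norm x; rwa [Real.norm_eq_abs] at this
  have hn0 : (0:ℝ) ≤ ‖h'‖ := norm_nonneg _
  -- membership of arguments in the interval [-K, K]
  have hmem : ∀ t : ℝ, t ∈ Set.Icc (0:ℝ) 1 → ∀ x, a x - γ * t * h' x ∈ Set.Icc (-K) K := by
    intro t ht x
    have h4 : |f x - hhat x| ≤ |f x| + |hhat x| := by
      simpa [sub_eq_add_neg] using abs_add_le (f x) (-(hhat x))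
    have h1 : |a x - γ * t * h' x| ≤ K := by
      have e1 : |a x| ≤ γ * (‖f‖ + ‖hhat‖) := by
        rw [ha_def]
        calc |γ * (f x - hhat x)| = γ * |f x - hhat x| := by
              rw [abs_mul, abs_of_pos hγ]
          _ ≤ γ * (‖f‖ + ‖hhat‖) := by
              have h2 := hbf x; have h3 := hbh x
              nlinarith
      have e2 : |γ * t * h' x| ≤ γ * ‖h'‖ := by
        rw [abs_mul, abs_mul, abs_of_pos hγ, abs_of_nonneg ht.1]
        have hx1 : t * |h' x| ≤ 1 * ‖h'‖ :=
          mul_le_mul ht.2 (hbh' x) (abs_nonneg _) zero_le_one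
        nlinarith [hγ.le]
      have h5 : |a x - γ * t * h' x| ≤ |a x| + |γ * t * h' x| := by
        simpa [sub_eq_add_neg] using abs_add_le (a x) (-(γ * t * h' x))
      calc |a x - γ * t * h' x| ≤ |a x| + |γ * t * h' x| := h5
        _ ≤ γ * (‖f‖ + ‖hhat‖) + γ * ‖h'‖ := add_le_add e1 e2
        _ = K := by rw [hK_def]; ring
    exact abs_le.mp h1
  have hamem : ∀ x, a x ∈ Set.Icc (-K) K := by
    intro x
    have := hmem 0 (by norm_num) x
    simpa using this
  -- Lipschitz bound for β on [-K, K]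
  set C : ℝ := deriv β K with hC_def
  have hC0 : 0 ≤ C := hd0 K
  have hlip : ∀ u ∈ Set.Icc (-K) K, ∀ v ∈ Set.Icc (-K) K, |β v - β u| ≤ C * |v - u| := by
    intro u hu v hv
    have := (convex_Icc (-K) K).norm_image_sub_le_of_norm_deriv_le
      (f := β) (fun y _ => hβdiff y)
      (fun y hy => by
        rw [Real.norm_eq_abs, abs_of_nonneg (hd0 y)]
        exact hdm hy.2) hu hv
    simpa [Real.norm_eq_abs] using this
  -- integrability of the penalty integrands
  have hβcont : Continuous β := hβdiff.continuous
  have hInt : ∀ t : ℝ, t ∈ Set.Icc (0:ℝ) 1 →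
      Integrable (fun x => β (a x - γ * t * h' x) / γ) θ := by
    intro t ht
    have hc : Continuous fun x => β (a x - γ * t * h' x) / γ :=
      (hβcont.comp (ha_cont.sub (continuous_const.mul h'.continuous))).div_const γ
    refine Integrable.mono' (integrable_const (β K / γ)) hc.aestronglyMeasurable
      (Filter.Eventually.of_forall fun x => ?_)
    rw [Real.norm_eq_abs, abs_div, abs_of_nonneg (hβ0 _), abs_of_pos hγ]
    have harg := (hmem t ht x).2
    have := hβmono harg
    gcongr
  have hInt0 : Integrable (fun x => β (a x) / γ) θ := by
    have := hInt 0 (by norm_num)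
    simpa using this
  -- the sequence of difference quotients
  set tseq : ℕ → ℝ := fun n => 1 / ((n : ℝ) + 1) with htseq_def
  have ht0 : ∀ n, 0 < tseq n := fun n => by positivity
  have ht1 : ∀ n, tseq n ≤ 1 := fun n => by
    rw [htseq_def]
    rw [div_le_one (by positivity)]
    have : (0:ℝ) ≤ (n : ℝ) := Nat.cast_nonneg n
    linarith
  have htmem : ∀ n, tseq n ∈ Set.Icc (0:ℝ) 1 := fun n => ⟨(ht0 n).le, ht1 n⟩
  set q : ℕ → X → ℝ := fun n x =>
    (β (a x - γ * tseq n * h' x) / γ - β (a x) / γ) / tseq n with hq_def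
  -- the per-n inequality
  have hIneq : ∀ n, -(∫ x, h' x ∂μ0) ≤ ∫ x, q n x ∂θ := by
    intro n
    have hQint : ∫ x, q n x ∂θ =
        ((∫ x, β (a x - γ * tseq n * h' x) / γ ∂θ) - ∫ x, β (a x) / γ ∂θ) / tseq n := by
      rw [hq_def]
      simp only
      rw [integral_div, integral_sub (hInt (tseq n) (htmem n)) hInt0]
    have hmain := hineq (tseq n) (ht0 n) (ht1 n)
    rw [hQint, le_div_iff₀ (ht0 n)]
    nlinarith [hmain]
  -- pointwise convergence of the difference quotients
  have hptw : ∀ x, Tendsto (fun n => q n x) atTop (𝓝 (-(deriv β (a x) * h' x))) := by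
    intro x
    have hG : HasDerivAt (fun s : ℝ => a x - γ * s * h' x) (-(γ * h' x)) 0 := by
      have h1 : HasDerivAt (fun s : ℝ => γ * s * h' x) (γ * h' x) 0 := by
        simpa using (((hasDerivAt_id (0:ℝ)).const_mul γ).mul_const (h' x))
      simpa using h1.const_sub (a x)
    have hF : HasDerivAt (fun s : ℝ => β (a x - γ * s * h' x) / γ)
        (-(deriv β (a x) * h' x)) 0 := by
      have hcomp : HasDerivAt (fun s : ℝ => β (a x - γ * s * h' x))
          (deriv β (a x) * -(γ * h' x)) 0 := by
        have hb := (hβdiff (a x - γ * 0 * h' x)).hasDerivAt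
        have := HasDerivAt.comp 0 hb hG
        simpa [Function.comp_def] using this
      have := hcomp.div_const γ
      rw [show -(deriv β (a x) * h' x) = deriv β (a x) * -(γ * h' x) / γ by
        rw [mul_neg, neg_div, mul_comm γ, ← mul_assoc, mul_div_assoc, div_self hγ.ne', mul_one]]
      exact this
    have hslope := hasDerivAt_iff_tendsto_slope.mp hF
    have htt : Tendsto tseq atTop (𝓝[≠] (0:ℝ)) := by
      refine tendsto_nhdsWithin_of_tendsto_nhds_of_eventually_within _
        ?_ (Filter.Eventually.of_forall fun n => ?_)
      · exact tendsto_one_div_add_atTop_nhds_zero_nat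
      · simp only [Set.mem_compl_iff, Set.mem_singleton_iff]
        exact (ht0 n).ne'
    have hcomp2 := hslope.comp htt
    refine hcomp2.congr fun n => ?_
    rw [Function.comp_apply, slope_def_field, hq_def]
    simp
  -- uniform bound
  have hqb : ∀ n, ∀ x, ‖q n x‖ ≤ C * ‖h'‖ := by
    intro n x
    have hu := hamem x
    have hv := hmem (tseq n) (htmem n) x
    have h1 := hlip (a x) hu (a x - γ * tseq n * h' x) hv
    have h2 : |a x - γ * tseq n * h' x - a x| = γ * tseq n * |h' x| := by
      rw [show a x - γ * tseq n * h' x - a x = -(γ * tseq n * h' x) by ring,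
        abs_neg, abs_mul, abs_mul, abs_of_pos hγ, abs_of_pos (ht0 n)]
    have h3 : q n x = (β (a x - γ * tseq n * h' x) - β (a x)) / (γ * tseq n) := by
      rw [hq_def]
      simp only
      rw [div_sub_div_same, div_div]
    rw [Real.norm_eq_abs, h3, abs_div, abs_of_pos (by positivity : (0:ℝ) < γ * tseq n)]
    rw [div_le_iff₀ (by positivity : (0:ℝ) < γ * tseq n)]
    calc |β (a x - γ * tseq n * h' x) - β (a x)|
        ≤ C * (γ * tseq n * |h' x|) := by rw [← h2]; exact h1
      _ ≤ C * ‖h'‖ * (γ * tseq n) := by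
          have hx1 : C * |h' x| ≤ C * ‖h'‖ := mul_le_mul_of_nonneg_left (hbh' x) hC0
          have hx2 : (C * |h' x|) * (γ * tseq n) ≤ (C * ‖h'‖) * (γ * tseq n) :=
            mul_le_mul_of_nonneg_right hx1 (by positivity)
          nlinarith [hx2]
  -- measurability of the quotients
  have hqmeas : ∀ n, AEStronglyMeasurable (q n) θ := by
    intro n
    have hc : Continuous (q n) := by
      rw [hq_def]
      exact (((hβcont.comp (ha_cont.sub (continuous_const.mul h'.continuous))).div_const γ |>.sub
        ((hβcont.comp ha_cont).div_const γ)).div_const (tseq n))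
    exact hc.aestronglyMeasurable
  -- dominated convergence
  have hT := tendsto_integral_of_dominated_convergence (μ := θ)
    (F := q) (f := fun x => -(deriv β (a x) * h' x)) (fun _ => C * ‖h'‖)
    hqmeas (integrable_const _)
    (fun n => Filter.Eventually.of_forall (hqb n))
    (Filter.Eventually.of_forall hptw)
  have hlim : -(∫ x, h' x ∂μ0) ≤ ∫ x, -(deriv β (a x) * h' x) ∂θ :=
    ge_of_tendsto hT (Filter.Eventually.of_forall hIneq)
  rw [integral_neg] at hlim
  linarith

/-- First-order condition: if `ĥ ∈ H` minimizes
`h ↦ ∫ h dμ0 + ∫ β_γ(f - h) dθ` over `H` and the measure `μ̂` with density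
`dμ̂/dθ = β_γ′(f - ĥ) = β′(γ(f - ĥ))` is a probability measure, then `μ̂ ∈ Q`,
i.e. `∫ h dμ̂ = ∫ h dμ0` for every `h ∈ H`. -/
theorem statement4 {X : Type*} [TopologicalSpace X] [PolishSpace X]
    [MeasurableSpace X] [BorelSpace X]
    (μ0 θ : Measure X) [IsProbabilityMeasure μ0] [IsProbabilityMeasure θ]
    (H : Submodule ℝ (X →ᵇ ℝ))
    (hconst : ∀ c : ℝ, BoundedContinuousFunction.const X c ∈ H)
    (β : ℝ → ℝ) (hβ0 : ∀ x, 0 ≤ β x) (hβdiff : Differentiable ℝ β)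
    (hβmono : Monotone β) (hβconv : ConvexOn ℝ Set.univ β)
    (hβsl : Tendsto (fun x => β x / x) atTop atTop)
    (γ : ℝ) (hγ : 0 < γ) (f : X →ᵇ ℝ)
    (hhat : X →ᵇ ℝ) (hhatH : hhat ∈ H)
    (hmin : ∀ h ∈ H,
      (∫ x, hhat x ∂μ0) + ∫ x, β (γ * (f x - hhat x)) / γ ∂θ ≤
        (∫ x, h x ∂μ0) + ∫ x, β (γ * (f x - h x)) / γ ∂θ)
    (hprob : IsProbabilityMeasure
      (θ.withDensity fun x => ENNReal.ofReal (deriv β (γ * (f x - hhat x))))) :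
    ∀ h ∈ H,
      ∫ x, h x ∂(θ.withDensity fun x => ENNReal.ofReal (deriv β (γ * (f x - hhat x)))) =
        ∫ x, h x ∂μ0 := by
  have hd0 : ∀ u, 0 ≤ deriv β u := aux_deriv_nonneg hβdiff hβmono hβconv
  -- the key inequality for every member of H
  have key : ∀ h' ∈ H, ∫ x, deriv β (γ * (f x - hhat x)) * h' x ∂θ ≤ ∫ x, h' x ∂μ0 := by
    intro h' hh'
    refine aux_key μ0 θ β hβ0 hβdiff hβmono hβconv γ hγ f hhat h' ?_
    intro t ht0' ht1'
    have hmemH : hhat + t • h' ∈ H := H.add_mem hhatH (H.smul_mem t hh')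
    have hm := hmin _ hmemH
    have e1 : ∫ x, (hhat + t • h') x ∂μ0 = (∫ x, hhat x ∂μ0) + t * ∫ x, h' x ∂μ0 := by
      simp only [BoundedContinuousFunction.coe_add, BoundedContinuousFunction.coe_smul,
        Pi.add_apply, Pi.smul_apply, smul_eq_mul]
      rw [integral_add (hhat.integrable μ0) ((h'.integrable μ0).const_mul t),
        integral_const_mul]
    have e2 : (∫ x, β (γ * (f x - (hhat + t • h') x)) / γ ∂θ) =
        ∫ x, β (γ * (f x - hhat x) - γ * t * h' x) / γ ∂θ := by
      refine integral_congr_ae (Filter.Eventually.of_forall fun x => ?_)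
      have harg : γ * (f x - (hhat + t • h') x) = γ * (f x - hhat x) - γ * t * h' x := by
        simp only [BoundedContinuousFunction.coe_add, BoundedContinuousFunction.coe_smul,
          Pi.add_apply, Pi.smul_apply, smul_eq_mul]
        ring
      show β (γ * (f x - (hhat + t • h') x)) / γ = β (γ * (f x - hhat x) - γ * t * h' x) / γ
      rw [harg]
    rw [e1, e2] at hm
    linarith
  intro h hH
  have h1 := key h hH
  have h2 := key (-h) (neg_mem hH)
  have h2' : -(∫ x, deriv β (γ * (f x - hhat x)) * h x ∂θ) ≤ -(∫ x, h x ∂μ0) := by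
    simp only [BoundedContinuousFunction.coe_neg, Pi.neg_apply, mul_neg] at h2
    rw [integral_neg, integral_neg] at h2
    exact h2
  have heq : ∫ x, deriv β (γ * (f x - hhat x)) * h x ∂θ = ∫ x, h x ∂μ0 := le_antisymm h1 (by linarith)
  -- rewrite the withDensity integral
  have hmeas_arg : Measurable fun x => γ * (f x - hhat x) :=
    (continuous_const.mul (f.continuous.sub hhat.continuous)).measurable
  have hgm : Measurable fun x => (deriv β (γ * (f x - hhat x))).toNNReal :=
    ((measurable_deriv β).comp hmeas_arg).real_toNNReal
  have hwd : (fun x => ENNReal.ofReal (deriv β (γ * (f x - hhat x)))) =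
      fun x => ((deriv β (γ * (f x - hhat x))).toNNReal : ENNReal) := rfl
  rw [hwd, integral_withDensity_eq_integral_smul hgm]
  rw [← heq]
  refine integral_congr_ae (Filter.Eventually.of_forall fun x => ?_)
  show (deriv β (γ * (f x - hhat x))).toNNReal • h x = deriv β (γ * (f x - hhat x)) * h x
  rw [NNReal.smul_def, smul_eq_mul, Real.coe_toNNReal _ (hd0 _)]
end

section
/- Let X be Polish, H ⊆ C_b(X) a linear subspace containing constants, μ0 a Borel probability measure, Q = {μ : ∫ h dμ = ∫ h dμ0 for all h ∈ H}, β a penalty function with conjugate β*, γ > 0, and θ a Borel probability measure. If π ∈ Q satisfies π ≪ θ and ∫ β*(dπ/dθ) dθ < ∞, then for every f ∈ C_b(X) one has φ_{θ,γ}(f) = inf_{h∈H}{∫ h dμ0 + ∫ β_γ(f−h) dθ} ≥ ∫ f dπ − (1/γ) ∫ β*(dπ/dθ) dθ > −∞; in particular φ_{θ,γ} is real-valued on C_b(X). -/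
open MeasureTheory BoundedContinuousFunction Filter Topology

/-
Fenchel–Young inequality `a y ≤ β a + β*(y)`, applied pointwise with `a = γ (f - h)` and
`y = dπ/dθ` and integrated against `θ`, gives
`γ ∫ (f - h) dπ ≤ ∫ β(γ (f - h)) dθ + ∫ β*(dπ/dθ) dθ`.
Since `π ∈ Q`, `∫ h dπ = ∫ h dμ0`; dividing by `γ` bounds the penalized value of every `h ∈ H`
from below, hence also their infimum.
-/

section ConvexConjugate

variable {β : ℝ → ℝ}

theorem bddAbove_mul_sub_of_tendsto_div (hβ0 : ∀ x, 0 ≤ β x)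
    (hβsl : Tendsto (fun x => β x / x) atTop atTop) {y : ℝ} (hy : 0 ≤ y) :
    BddAbove {z : ℝ | ∃ x : ℝ, z = x * y - β x} := by
  obtain ⟨M, hM⟩ := eventually_atTop.mp (hβsl.eventually_ge_atTop (y + 1))
  refine ⟨max 1 M * y, ?_⟩
  rintro z ⟨x, rfl⟩
  have hMy : 0 ≤ max 1 M * y := mul_nonneg (zero_le_one.trans (le_max_left 1 M)) hy
  rcases le_or_gt x (max 1 M) with hxM | hxM
  · nlinarith [hβ0 x]
  · have hx : 0 < x := zero_lt_one.trans_le (le_max_left 1 M) |>.trans hxM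
    have hβx : (y + 1) * x ≤ β x := (le_div_iff₀ hx).mp (hM x (le_max_right 1 M |>.trans hxM.le))
    nlinarith

theorem mul_sub_le_betaConj (hβ0 : ∀ x, 0 ≤ β x)
    (hβsl : Tendsto (fun x => β x / x) atTop atTop) (a : ℝ) {y : ℝ} (hy : 0 ≤ y) :
    a * y - β a ≤ betaConj β y :=
  le_csSup (bddAbove_mul_sub_of_tendsto_div hβ0 hβsl hy) ⟨a, rfl⟩

end ConvexConjugate

section Integral

variable {X : Type*} [TopologicalSpace X] [MeasurableSpace X] [OpensMeasurableSpace X]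
  {β : ℝ → ℝ}

theorem integrable_comp_of_monotone (hβ0 : ∀ x, 0 ≤ β x) (hβmono : Monotone β)
    (θ : Measure X) [IsFiniteMeasure θ] (g : X →ᵇ ℝ) :
    Integrable (fun x => β (g x)) θ := by
  refine (integrable_const (β ‖g‖)).mono'
    (hβmono.measurable.comp_aemeasurable g.continuous.aemeasurable).aestronglyMeasurable ?_
  filter_upwards with x
  rw [Real.norm_eq_abs, abs_of_nonneg (hβ0 _)]
  exact hβmono (g.apply_le_norm x)

theorem integral_le_integral_comp_add_integral_betaConj (hβ0 : ∀ x, 0 ≤ β x)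
    (hβmono : Monotone β) (hβsl : Tendsto (fun x => β x / x) atTop atTop)
    {π θ : Measure X} [IsFiniteMeasure π] [IsFiniteMeasure θ] (hπac : π ≪ θ)
    (hπint : Integrable (fun x => betaConj β ((π.rnDeriv θ x).toReal)) θ) (g : X →ᵇ ℝ) :
    ∫ x, g x ∂π ≤ (∫ x, β (g x) ∂θ) + ∫ x, betaConj β ((π.rnDeriv θ x).toReal) ∂θ := by
  have hβg := integrable_comp_of_monotone hβ0 hβmono θ g
  rw [← integral_rnDeriv_smul hπac, ← integral_add hβg hπint]
  refine integral_mono ((integrable_rnDeriv_smul_iff hπac).mpr (g.integrable π))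
    (hβg.add hπint) fun x => ?_
  have := mul_sub_le_betaConj hβ0 hβsl (g x) (ENNReal.toReal_nonneg (a := π.rnDeriv θ x))
  simp only [smul_eq_mul]
  linarith

end Integral

theorem statement6_general {X : Type*} [TopologicalSpace X]
    [MeasurableSpace X] [BorelSpace X]
    (μ0 θ : Measure X) [IsProbabilityMeasure θ]
    (H : Submodule ℝ (X →ᵇ ℝ))
    (β : ℝ → ℝ) (hβ0 : ∀ x, 0 ≤ β x)
    (hβmono : Monotone β)
    (hβsl : Tendsto (fun x => β x / x) atTop atTop)
    (γ : ℝ) (hγ : 0 < γ)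
    (π : Measure X) (hπQ : memQ μ0 (H : Set (X →ᵇ ℝ)) π) (hπac : π ≪ θ)
    (hπint : Integrable (fun x => betaConj β ((π.rnDeriv θ x).toReal)) θ)
    (f : X →ᵇ ℝ) :
    (∀ h ∈ H,
      (∫ x, f x ∂π) - (1 / γ) * ∫ x, betaConj β ((π.rnDeriv θ x).toReal) ∂θ ≤
        (∫ x, h x ∂μ0) + ∫ x, β (γ * (f x - h x)) / γ ∂θ) ∧
    (∫ x, f x ∂π) - (1 / γ) * ∫ x, betaConj β ((π.rnDeriv θ x).toReal) ∂θ ≤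
      phiReg μ0 θ (H : Set (X →ᵇ ℝ)) β γ f := by
  obtain ⟨hπ, hπH⟩ := hπQ
  have bound : ∀ h ∈ H,
      (∫ x, f x ∂π) - (1 / γ) * ∫ x, betaConj β ((π.rnDeriv θ x).toReal) ∂θ ≤
        (∫ x, h x ∂μ0) + ∫ x, β (γ * (f x - h x)) / γ ∂θ := by
    intro h hh
    have fenchel := integral_le_integral_comp_add_integral_betaConj hβ0 hβmono hβsl hπac hπint
      (γ • (f - h))
    simp only [coe_smul, coe_sub, Pi.sub_apply, smul_eq_mul] at fenchel
    rw [integral_const_mul, integral_sub (f.integrable π) (h.integrable π), hπH h hh] at fenchel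
    rw [integral_div]
    calc (∫ x, f x ∂π) - (1 / γ) * ∫ x, betaConj β ((π.rnDeriv θ x).toReal) ∂θ
        = (∫ x, h x ∂μ0) + (γ * ((∫ x, f x ∂π) - ∫ x, h x ∂μ0)
            - ∫ x, betaConj β ((π.rnDeriv θ x).toReal) ∂θ) / γ := by
          field_simp
          ring
      _ ≤ _ := by gcongr; linarith
  exact ⟨bound, le_csInf ⟨_, 0, H.zero_mem, rfl⟩ fun r ⟨h, hh, hr⟩ => hr ▸ bound h hh⟩

/-- If `π ∈ Q` satisfies `π ≪ θ` and `∫ β*(dπ/dθ) dθ < ∞`, then for every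
`f ∈ C_b(X)` the penalized value of every `h ∈ H` is bounded below by
`∫ f dπ - (1/γ) ∫ β*(dπ/dθ) dθ`, and hence so is `φ_{θ,γ}(f)`;
in particular `φ_{θ,γ}` is real-valued on `C_b(X)`. -/
theorem statement6 {X : Type*} [TopologicalSpace X] [PolishSpace X]
    [MeasurableSpace X] [BorelSpace X]
    (μ0 θ : Measure X) [IsProbabilityMeasure μ0] [IsProbabilityMeasure θ]
    (H : Submodule ℝ (X →ᵇ ℝ))
    (hconst : ∀ c : ℝ, BoundedContinuousFunction.const X c ∈ H)
    (β : ℝ → ℝ) (hβ0 : ∀ x, 0 ≤ β x) (hβdiff : Differentiable ℝ β)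
    (hβmono : Monotone β) (hβconv : ConvexOn ℝ Set.univ β)
    (hβsl : Tendsto (fun x => β x / x) atTop atTop)
    (γ : ℝ) (hγ : 0 < γ)
    (π : Measure X) (hπQ : memQ μ0 (H : Set (X →ᵇ ℝ)) π) (hπac : π ≪ θ)
    (hπint : Integrable (fun x => betaConj β ((π.rnDeriv θ x).toReal)) θ)
    (f : X →ᵇ ℝ) :
    (∀ h ∈ H,
      (∫ x, f x ∂π) - (1 / γ) * ∫ x, betaConj β ((π.rnDeriv θ x).toReal) ∂θ ≤
        (∫ x, h x ∂μ0) + ∫ x, β (γ * (f x - h x)) / γ ∂θ) ∧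
    (∫ x, f x ∂π) - (1 / γ) * ∫ x, betaConj β ((π.rnDeriv θ x).toReal) ∂θ ≤
      phiReg μ0 θ (H : Set (X →ᵇ ℝ)) β γ f :=
  statement6_general μ0 θ H β hβ0 hβmono hβsl γ hγ π hπQ hπac hπint f
end

section
/- Let X be Polish, H ⊆ C_b(X) a linear subspace containing constants, μ0 and θ Borel probability measures on X, β a penalty function, γ > 0, and suppose there exists π ∈ Q with π ≪ θ and ∫ β*(dπ/dθ) dθ < ∞ (so that φ_{θ,γ} is real-valued). Then φ_{θ,γ}(f) = inf_{h∈H}{∫ h dμ0 + ∫ β_γ(f−h) dθ} is continuous from above on C_b(X): for every sequence (f_k) in C_b(X) with f_k ↓ f pointwise for some f ∈ C_b(X), one has φ_{θ,γ}(f_k) ↓ φ_{θ,γ}(f). -/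
open MeasureTheory BoundedContinuousFunction Filter Topology

lemma betaConj_bddAbove (β : ℝ → ℝ) (hβ0 : ∀ x, 0 ≤ β x)
    (hβsl : Tendsto (fun x => β x / x) atTop atTop) {y : ℝ} (hy : 0 ≤ y) :
    BddAbove {z : ℝ | ∃ x : ℝ, z = x * y - β x} := by
  obtain ⟨M, hM⟩ := (Filter.tendsto_atTop.1 hβsl (y + 1)).exists_forall_of_atTop
  refine ⟨max 0 (max M 1 * y), ?_⟩
  rintro z ⟨x, rfl⟩
  rcases le_or_gt x (max M 1) with hx | hx
  · rcases le_or_gt x 0 with h0 | h0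
    · have h1 : x * y ≤ 0 := mul_nonpos_of_nonpos_of_nonneg h0 hy
      exact le_max_of_le_left (by linarith [hβ0 x])
    · have h1 : x * y ≤ max M 1 * y := mul_le_mul_of_nonneg_right hx hy
      exact le_max_of_le_right (by linarith [hβ0 x])
  · have hx1 : (1 : ℝ) ≤ x := le_trans (le_max_right M 1) hx.le
    have hβx : (y + 1) * x ≤ β x := by
      have h2 := hM x (le_trans (le_max_left M 1) hx.le)
      rwa [le_div_iff₀ (by linarith : (0:ℝ) < x)] at h2
    have : x * y - β x ≤ 0 := by nlinarith
    exact le_max_of_le_left this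

lemma fenchel_young (β : ℝ → ℝ) (hβ0 : ∀ x, 0 ≤ β x)
    (hβsl : Tendsto (fun x => β x / x) atTop atTop) (x : ℝ) {y : ℝ} (hy : 0 ≤ y) :
    x * y - β x ≤ betaConj β y :=
  le_csSup (betaConj_bddAbove β hβ0 hβsl hy) ⟨x, rfl⟩

lemma integrable_beta_comp {X : Type*} [TopologicalSpace X] [MeasurableSpace X]
    [OpensMeasurableSpace X] (θ : Measure X) [IsFiniteMeasure θ]
    (β : ℝ → ℝ) (hβ0 : ∀ x, 0 ≤ β x) (hβc : Continuous β) (hβmono : Monotone β)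
    {γ : ℝ} (hγ : 0 ≤ γ) (f h : X →ᵇ ℝ) :
    Integrable (fun x => β (γ * (f x - h x))) θ := by
  refine Integrable.mono' (integrable_const (β (γ * (‖f‖ + ‖h‖))))
    ((hβc.comp (continuous_const.mul (f.continuous.sub h.continuous))).aestronglyMeasurable) ?_
  filter_upwards with x
  rw [Real.norm_eq_abs, abs_of_nonneg (hβ0 _)]
  apply hβmono
  have h1 : |f x| ≤ ‖f‖ := f.norm_coe_le_norm x
  have h2 : |h x| ≤ ‖h‖ := h.norm_coe_le_norm x
  have := abs_le.1 h1
  have := abs_le.1 h2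
  exact mul_le_mul_of_nonneg_left (by linarith) hγ

lemma key_lower_bound {X : Type*} [TopologicalSpace X] [MeasurableSpace X]
    [OpensMeasurableSpace X]
    (μ0 θ : Measure X) [IsProbabilityMeasure μ0] [IsProbabilityMeasure θ]
    (β : ℝ → ℝ) (hβ0 : ∀ x, 0 ≤ β x) (hβc : Continuous β) (hβmono : Monotone β)
    (hβsl : Tendsto (fun x => β x / x) atTop atTop)
    {γ : ℝ} (hγ : 0 < γ)
    (π : Measure X) [IsProbabilityMeasure π] (hπac : π ≪ θ)
    (hπint : Integrable (fun x => betaConj β ((π.rnDeriv θ x).toReal)) θ)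
    (g h : X →ᵇ ℝ) (hπμ0 : ∫ x, h x ∂π = ∫ x, h x ∂μ0) :
    (∫ x, g x ∂π) - (∫ x, betaConj β ((π.rnDeriv θ x).toReal) ∂θ) / γ
      ≤ (∫ x, h x ∂μ0) + ∫ x, β (γ * (g x - h x)) / γ ∂θ := by
  set ρ : X → ℝ := fun x => (π.rnDeriv θ x).toReal with hρ
  have hρmeas : Measurable ρ := (Measure.measurable_rnDeriv π θ).ennreal_toReal
  have hρ0 : ∀ x, 0 ≤ ρ x := fun x => ENNReal.toReal_nonneg
  have step1 : ∫ x, (g x - h x) ∂π = (∫ x, g x ∂π) - ∫ x, h x ∂μ0 := by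
    rw [integral_sub (g.integrable π) (h.integrable π), hπμ0]
  have step2 : ∫ x, (g x - h x) ∂π = ∫ x, ρ x * (g x - h x) ∂θ := by
    rw [← MeasureTheory.integral_rnDeriv_smul hπac (f := fun x => g x - h x)]
    simp [smul_eq_mul]
    rfl
  have ptwise : ∀ x, ρ x * (g x - h x) ≤ β (γ * (g x - h x)) / γ + betaConj β (ρ x) / γ := by
    intro x
    have hfy := fenchel_young β hβ0 hβsl (γ * (g x - h x)) (hρ0 x)
    rw [← add_div, le_div_iff₀ hγ]
    nlinarith [hfy]
  have intL : Integrable (fun x => ρ x * (g x - h x)) θ := by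
    refine Integrable.mono'
      ((Measure.integrable_toReal_rnDeriv (μ := π) (ν := θ)).const_mul (‖g‖ + ‖h‖))
      ((hρmeas.mul (g.continuous.sub h.continuous).measurable).aestronglyMeasurable) ?_
    filter_upwards with x
    rw [Real.norm_eq_abs, abs_mul, abs_of_nonneg (hρ0 x)]
    have h1 : |g x - h x| ≤ ‖g‖ + ‖h‖ := by
      have h1 : |g x| ≤ ‖g‖ := g.norm_coe_le_norm x
      have h2 : |h x| ≤ ‖h‖ := h.norm_coe_le_norm x
      have := abs_le.1 h1; have := abs_le.1 h2
      rw [abs_le]; constructor <;> linarith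
    nlinarith [hρ0 x, abs_nonneg (g x - h x)]
  have intR1 : Integrable (fun x => β (γ * (g x - h x)) / γ) θ :=
    (integrable_beta_comp θ β hβ0 hβc hβmono hγ.le g h).div_const γ
  have intR2 : Integrable (fun x => betaConj β (ρ x) / γ) θ := hπint.div_const γ
  have step3 : ∫ x, ρ x * (g x - h x) ∂θ
      ≤ (∫ x, β (γ * (g x - h x)) / γ ∂θ) + (∫ x, betaConj β (ρ x) ∂θ) / γ := by
    calc ∫ x, ρ x * (g x - h x) ∂θ
        ≤ ∫ x, (β (γ * (g x - h x)) / γ + betaConj β (ρ x) / γ) ∂θ :=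
          integral_mono intL (intR1.add intR2) ptwise
      _ = (∫ x, β (γ * (g x - h x)) / γ ∂θ) + ∫ x, betaConj β (ρ x) / γ ∂θ :=
          integral_add intR1 intR2
      _ = (∫ x, β (γ * (g x - h x)) / γ ∂θ) + (∫ x, betaConj β (ρ x) ∂θ) / γ := by
          simp only [integral_div]
  linarith [step1, step2, step3]

/-- Under the existence of `π ∈ Q` with `π ≪ θ` and `∫ β*(dπ/dθ) dθ < ∞`,
the regularized functional `φ_{θ,γ}` is continuous from above on `C_b(X)`:
if `f_k ↓ f` pointwise, then `φ_{θ,γ}(f_k) ↓ φ_{θ,γ}(f)`. -/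
theorem statement7 {X : Type*} [TopologicalSpace X] [PolishSpace X]
    [MeasurableSpace X] [BorelSpace X]
    (μ0 θ : Measure X) [IsProbabilityMeasure μ0] [IsProbabilityMeasure θ]
    (H : Submodule ℝ (X →ᵇ ℝ))
    (hconst : ∀ c : ℝ, BoundedContinuousFunction.const X c ∈ H)
    (β : ℝ → ℝ) (hβ0 : ∀ x, 0 ≤ β x) (hβdiff : Differentiable ℝ β)
    (hβmono : Monotone β) (hβconv : ConvexOn ℝ Set.univ β)
    (hβsl : Tendsto (fun x => β x / x) atTop atTop)
    (γ : ℝ) (hγ : 0 < γ)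
    (π : Measure X) (hπQ : memQ μ0 (H : Set (X →ᵇ ℝ)) π) (hπac : π ≪ θ)
    (hπint : Integrable (fun x => betaConj β ((π.rnDeriv θ x).toReal)) θ) :
    ∀ (fk : ℕ → X →ᵇ ℝ) (f : X →ᵇ ℝ),
      (∀ x, Antitone (fun k => fk k x)) →
      (∀ x, Tendsto (fun k => fk k x) atTop (𝓝 (f x))) →
      Antitone (fun k => phiReg μ0 θ (H : Set (X →ᵇ ℝ)) β γ (fk k)) ∧
        Tendsto (fun k => phiReg μ0 θ (H : Set (X →ᵇ ℝ)) β γ (fk k)) atTop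
          (𝓝 (phiReg μ0 θ (H : Set (X →ᵇ ℝ)) β γ f)) := by
  intro fk f hanti htend
  haveI hπprob : IsProbabilityMeasure π := hπQ.1
  have hβc : Continuous β := hβdiff.continuous
  set S : (X →ᵇ ℝ) → Set ℝ := fun g =>
    {r : ℝ | ∃ h ∈ (H : Set (X →ᵇ ℝ)),
      r = (∫ x, h x ∂μ0) + ∫ x, β (γ * (g x - h x)) / γ ∂θ} with hSdef
  have hphi : ∀ g : X →ᵇ ℝ, phiReg μ0 θ (H : Set (X →ᵇ ℝ)) β γ g = sInf (S g) :=
    fun g => rfl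
  have hne : ∀ g : X →ᵇ ℝ, (S g).Nonempty := fun g => ⟨_, 0, H.zero_mem, rfl⟩
  have hlb : ∀ g : X →ᵇ ℝ, ∀ r ∈ S g,
      (∫ x, g x ∂π) - (∫ x, betaConj β ((π.rnDeriv θ x).toReal) ∂θ) / γ ≤ r := by
    rintro g r ⟨h, hh, rfl⟩
    exact key_lower_bound μ0 θ β hβ0 hβc hβmono hβsl hγ π hπac hπint g h (hπQ.2 h hh)
  have hbdd : ∀ g : X →ᵇ ℝ, BddBelow (S g) := fun g => ⟨_, fun r hr => hlb g r hr⟩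
  have hmono : ∀ g1 g2 : X →ᵇ ℝ, (∀ x, g1 x ≤ g2 x) → sInf (S g1) ≤ sInf (S g2) := by
    intro g1 g2 hle
    apply le_csInf (hne g2)
    rintro r ⟨h, hh, rfl⟩
    refine le_trans (csInf_le (hbdd g1) ⟨h, hh, rfl⟩) ?_
    have hint : ∫ x, β (γ * (g1 x - h x)) / γ ∂θ ≤ ∫ x, β (γ * (g2 x - h x)) / γ ∂θ := by
      refine integral_mono ((integrable_beta_comp θ β hβ0 hβc hβmono hγ.le g1 h).div_const γ)
        ((integrable_beta_comp θ β hβ0 hβc hβmono hγ.le g2 h).div_const γ) (fun x => ?_)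
      gcongr
      exact hβmono (mul_le_mul_of_nonneg_left (sub_le_sub_right (hle x) (h x)) hγ.le)
    linarith
  have hlef : ∀ k x, f x ≤ fk k x := fun k x =>
    le_of_tendsto (htend x) (eventually_atTop.2 ⟨k, fun l hl => hanti x hl⟩)
  have hA : Antitone (fun k => phiReg μ0 θ (H : Set (X →ᵇ ℝ)) β γ (fk k)) := by
    intro k l hkl
    simp only [hphi]
    exact hmono _ _ (fun x => hanti x hkl)
  refine ⟨hA, ?_⟩
  simp only [hphi]
  rw [tendsto_order]
  constructor
  · intro a ha
    exact Eventually.of_forall fun k => lt_of_lt_of_le ha (hmono f (fk k) (hlef k))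
  · intro a ha
    obtain ⟨r, hrS, hr⟩ := exists_lt_of_csInf_lt (hne f)
      (show sInf (S f) < (sInf (S f) + a) / 2 by linarith)
    obtain ⟨h, hh, rfl⟩ := hrS
    have hDCT : Tendsto (fun k => ∫ x, β (γ * (fk k x - h x)) / γ ∂θ) atTop
        (𝓝 (∫ x, β (γ * (f x - h x)) / γ ∂θ)) := by
      refine tendsto_integral_of_dominated_convergence
        (fun _ => β (γ * (‖fk 0‖ + ‖h‖)) / γ)
        (fun k => ((integrable_beta_comp θ β hβ0 hβc hβmono hγ.le (fk k) h).div_const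
          γ).aestronglyMeasurable)
        (integrable_const _) (fun k => ?_) ?_
      · filter_upwards with x
        rw [Real.norm_eq_abs, abs_div, abs_of_nonneg (hβ0 _), abs_of_pos hγ]
        gcongr
        apply hβmono
        have h0 : fk k x ≤ fk 0 x := hanti x (Nat.zero_le k)
        have h1 := abs_le.1 ((fk 0).norm_coe_le_norm x)
        have h2 := abs_le.1 (h.norm_coe_le_norm x)
        exact mul_le_mul_of_nonneg_left (by linarith) hγ.le
      · filter_upwards with x
        exact ((hβc.tendsto (γ * (f x - h x))).comp
          (((htend x).sub_const (h x)).const_mul γ)).div_const γ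
    have hTend : Tendsto
        (fun k => (∫ x, h x ∂μ0) + ∫ x, β (γ * (fk k x - h x)) / γ ∂θ) atTop
        (𝓝 ((∫ x, h x ∂μ0) + ∫ x, β (γ * (f x - h x)) / γ ∂θ)) :=
      tendsto_const_nhds.add hDCT
    filter_upwards [hTend.eventually_lt_const (show _ < a by linarith)] with k hk
    exact lt_of_le_of_lt (csInf_le (hbdd _) ⟨h, hh, rfl⟩) hk
end

section
/- Let X be a Polish space, θ a Borel probability measure on X, β : ℝ → [0,∞) a differentiable nondecreasing convex function with β(x)/x → ∞ as x → ∞, γ > 0, β_γ(x) = β(γx)/γ, and β*_γ(y) = sup_{x∈ℝ}(xy − β_γ(x)). Define ψ_{θ,γ}(f) = ∫ β_γ(f) dθ for f ∈ C_b(X). Then for every Borel probability measure μ on X, the convex conjugate ψ*_{θ,γ}(μ) = sup_{f ∈ C_b(X)} { ∫ f dμ − ∫ β_γ(f) dθ } equals ∫ β*_γ(dμ/dθ) dθ if μ ≪ θ, and equals +∞ if μ is not absolutely continuous with respect to θ. -/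
open MeasureTheory BoundedContinuousFunction Filter Topology

section basic
variable {b : ℝ → ℝ}

lemma conj_bddAbove (hb0 : ∀ x, 0 ≤ b x)
    (hbsl : Tendsto (fun x => b x / x) atTop atTop) {y : ℝ} (hy : 0 ≤ y) :
    BddAbove {z : ℝ | ∃ x : ℝ, z = x * y - b x} := by
  obtain ⟨x₀, hx₀⟩ := (hbsl.eventually_ge_atTop (y + 1)).exists_forall_of_atTop
  refine ⟨max 0 ((max x₀ 1) * y), ?_⟩
  rintro z ⟨x, rfl⟩
  rcases le_or_gt x (max x₀ 1) with h | h
  · have : x * y ≤ (max x₀ 1) * y := mul_le_mul_of_nonneg_right h hy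
    have := hb0 x
    refine le_trans ?_ (le_max_right _ _); linarith
  · have hx1 : (1:ℝ) < x := lt_of_le_of_lt (le_max_right _ _) h
    have hbx : y + 1 ≤ b x / x := hx₀ x (le_of_lt (lt_of_le_of_lt (le_max_left _ _) h))
    have hxpos : (0:ℝ) < x := lt_trans one_pos hx1
    have hdiv : b x / x * x = b x := by field_simp
    have : (y + 1) * x ≤ b x := by nlinarith [mul_le_mul_of_nonneg_right hbx (le_of_lt hxpos)]
    refine le_trans ?_ (le_max_left _ _); nlinarith
end basic

section basic2
variable {b : ℝ → ℝ}

lemma conj_young (hb0 : ∀ x, 0 ≤ b x)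
    (hbsl : Tendsto (fun x => b x / x) atTop atTop) {y : ℝ} (hy : 0 ≤ y) (x : ℝ) :
    x * y - b x ≤ betaConj b y :=
  le_csSup (conj_bddAbove hb0 hbsl hy) ⟨x, rfl⟩

lemma conj_lb (hb0 : ∀ x, 0 ≤ b x)
    (hbsl : Tendsto (fun x => b x / x) atTop atTop) {y : ℝ} (hy : 0 ≤ y) :
    - b 0 ≤ betaConj b y := by
  have := conj_young hb0 hbsl hy 0; linarith

/-- existence of maximizers on `[-n, n]` -/
lemma exists_max (hbc : Continuous b) (n : ℕ) (y : ℝ) :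
    ∃ x ∈ Set.Icc (-(n:ℝ)) n, ∀ u ∈ Set.Icc (-(n:ℝ)) n, u * y - b u ≤ x * y - b x := by
  have hne : (Set.Icc (-(n:ℝ)) n).Nonempty := ⟨0, by simp⟩
  have hcmp : IsCompact (Set.Icc (-(n:ℝ)) n) := isCompact_Icc
  obtain ⟨x, hx, hmax⟩ := hcmp.exists_isMaxOn hne
    ((continuous_id.mul continuous_const).sub hbc).continuousOn
  exact ⟨x, hx, fun u hu => hmax hu⟩
end basic2

noncomputable def argmaxFn (b : ℝ → ℝ) (hbc : Continuous b) (n : ℕ) (y : ℝ) : ℝ :=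
  (exists_max hbc n y).choose

noncomputable def phiFn (b : ℝ → ℝ) (hbc : Continuous b) (n : ℕ) (y : ℝ) : ℝ :=
  argmaxFn b hbc n y * y - b (argmaxFn b hbc n y)

section phi
variable {b : ℝ → ℝ} (hbc : Continuous b)

lemma argmax_mem (n : ℕ) (y : ℝ) : argmaxFn b hbc n y ∈ Set.Icc (-(n:ℝ)) n :=
  (exists_max hbc n y).choose_spec.1

lemma argmax_spec (n : ℕ) (y : ℝ) :
    ∀ u ∈ Set.Icc (-(n:ℝ)) n, u * y - b u ≤ phiFn b hbc n y :=
  (exists_max hbc n y).choose_spec.2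

lemma argmax_mono (n : ℕ) : Monotone (argmaxFn b hbc n) := by
  intro y₁ y₂ h
  rcases eq_or_lt_of_le h with rfl | hlt
  · exact le_refl _
  set s₁ := argmaxFn b hbc n y₁
  set s₂ := argmaxFn b hbc n y₂
  have h1 : s₂ * y₁ - b s₂ ≤ s₁ * y₁ - b s₁ := argmax_spec hbc n y₁ _ (argmax_mem hbc n y₂)
  have h2 : s₁ * y₂ - b s₁ ≤ s₂ * y₂ - b s₂ := argmax_spec hbc n y₂ _ (argmax_mem hbc n y₁)
  nlinarith

lemma phi_measurable (n : ℕ) : Measurable (phiFn b hbc n) := by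
  have h1 : Measurable (argmaxFn b hbc n) := (argmax_mono hbc n).measurable
  exact (h1.mul measurable_id).sub (hbc.measurable.comp h1)

lemma phi_lb (n : ℕ) (y : ℝ) : - b 0 ≤ phiFn b hbc n y := by
  have := argmax_spec hbc n y 0 (by simp)
  simpa using this

lemma phi_mono (y : ℝ) : Monotone fun n => phiFn b hbc n y := by
  apply monotone_nat_of_le_succ
  intro n
  refine argmax_spec hbc (n+1) y _ ?_
  have := argmax_mem hbc n y
  simp only [Set.mem_Icc] at this ⊢
  push_cast
  constructor <;> linarith [this.1, this.2]

lemma phi_le_conj (hb0 : ∀ x, 0 ≤ b x)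
    (hbsl : Tendsto (fun x => b x / x) atTop atTop) (n : ℕ) {y : ℝ} (hy : 0 ≤ y) :
    phiFn b hbc n y ≤ betaConj b y :=
  conj_young hb0 hbsl hy _

lemma phi_tendsto (hb0 : ∀ x, 0 ≤ b x)
    (hbsl : Tendsto (fun x => b x / x) atTop atTop) {y : ℝ} (hy : 0 ≤ y) :
    Tendsto (fun n => phiFn b hbc n y) atTop (𝓝 (betaConj b y)) := by
  have hbdd : BddAbove (Set.range fun n => phiFn b hbc n y) := by
    refine ⟨betaConj b y, ?_⟩
    rintro z ⟨n, rfl⟩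
    exact phi_le_conj hbc hb0 hbsl n hy
  have h := tendsto_atTop_ciSup (phi_mono hbc y) hbdd
  have heq : ⨆ n, phiFn b hbc n y = betaConj b y := by
    apply le_antisymm
    · exact ciSup_le fun n => phi_le_conj hbc hb0 hbsl n hy
    · refine csSup_le ⟨0 * y - b 0, ⟨0, rfl⟩⟩ ?_
      rintro z ⟨x, rfl⟩
      refine le_trans ?_ (le_ciSup hbdd ⌈|x|⌉₊)
      refine argmax_spec hbc _ y x ?_
      have h1 : |x| ≤ (⌈|x|⌉₊ : ℝ) := Nat.le_ceil _
      have := abs_le.mp h1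
      simpa using this
  rwa [heq] at h
end phi

lemma ereal_le_iSup {ι : Type*} (v : ι → ℝ) (c : ℝ)
    (h : ∀ ε : ℝ, 0 < ε → ∃ i, c - ε ≤ v i) :
    (c : EReal) ≤ ⨆ i, (v i : EReal) := by
  refine le_of_forall_lt fun w hw => ?_
  induction w with
  | bot =>
    obtain ⟨i, hi⟩ := h 1 one_pos
    exact lt_of_lt_of_le (bot_lt_iff_ne_bot.mpr (by simp)) (le_iSup (fun i => ((v i : ℝ) : EReal)) i)
  | coe r =>
    have hr : r < c := by exact_mod_cast hw
    obtain ⟨i, hi⟩ := h ((c - r)/2) (by linarith)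
    have : r < v i := by linarith
    exact lt_of_lt_of_le (by exact_mod_cast this) (le_iSup (fun i => ((v i : ℝ) : EReal)) i)
  | top => exact absurd hw (by simp)

lemma ereal_iSup_eq_top {ι : Type*} (v : ι → ℝ)
    (h : ∀ M : ℝ, ∃ i, M ≤ v i) : (⨆ i, (v i : EReal)) = ⊤ := by
  rw [iSup_eq_top]
  intro w hw
  induction w with
  | bot =>
    obtain ⟨i, hi⟩ := h 0
    exact ⟨i, bot_lt_iff_ne_bot.mpr (by simp)⟩
  | coe r =>
    obtain ⟨i, hi⟩ := h (r + 1)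
    have hri : r < v i := by linarith
    exact ⟨i, by exact_mod_cast hri⟩
  | top => exact absurd hw (lt_irrefl _)

section lip
variable {b : ℝ → ℝ}

lemma b_lip (hbconv : ConvexOn ℝ Set.univ b) (hbdiff : Differentiable ℝ b)
    (n : ℕ) {u v : ℝ} (hu : u ∈ Set.Icc (-(n:ℝ)) n) (hv : v ∈ Set.Icc (-(n:ℝ)) n) :
    |b u - b v| ≤ (max |deriv b (-(n:ℝ))| |deriv b n|) * |u - v| := by
  have hmono : MonotoneOn (deriv b) Set.univ :=
    hbconv.monotoneOn_deriv (fun x _ => hbdiff x)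
  have hbound : ∀ x ∈ Set.Icc (-(n:ℝ)) n, ‖deriv b x‖ ≤ max |deriv b (-(n:ℝ))| |deriv b n| := by
    intro x hx
    rw [Real.norm_eq_abs, abs_le]
    have h1 : deriv b (-(n:ℝ)) ≤ deriv b x := hmono trivial trivial hx.1
    have h2 : deriv b x ≤ deriv b n := hmono trivial trivial hx.2
    constructor
    · calc -(max |deriv b (-(n:ℝ))| |deriv b n|) ≤ -|deriv b (-(n:ℝ))| := by
            simp [le_max_left]
      _ ≤ deriv b (-(n:ℝ)) := neg_abs_le _
      _ ≤ deriv b x := h1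
    · exact le_trans h2 (le_trans (le_abs_self _) (le_max_right _ _))
  have := Convex.norm_image_sub_le_of_norm_deriv_le
    (fun x _ => hbdiff x) hbound (convex_Icc _ _) hv hu
  simpa [Real.norm_eq_abs] using this
end lip

lemma clamp_close {t u n' : ℝ} (h : u ∈ Set.Icc (-n') n') :
    |max (min t n') (-n') - u| ≤ |t - u| := by
  obtain ⟨hu1, hu2⟩ := h
  have hn0 : -n' ≤ n' := le_trans hu1 hu2
  rcases le_total t n' with h1 | h1
  · rw [min_eq_left h1]
    rcases le_total (-n') t with h2 | h2
    · rw [max_eq_left h2]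
    · rw [max_eq_right h2, abs_of_nonpos (by linarith)]
      calc -(-n' - u) = u - -n' := by ring
      _ ≤ u - t := by linarith
      _ ≤ |t - u| := by rw [abs_sub_comm]; exact le_abs_self _
  · rw [min_eq_right h1, max_eq_left hn0, abs_of_nonneg (by linarith)]
    calc n' - u ≤ t - u := by linarith
    _ ≤ |t - u| := le_abs_self _

lemma clamp_mem {t n' : ℝ} (hn0 : 0 ≤ n') : max (min t n') (-n') ∈ Set.Icc (-n') n' :=
  ⟨le_max_right _ _, max_le (min_le_right _ _) (by linarith)⟩

section meas
variable {X : Type*} [TopologicalSpace X] [PolishSpace X] [MeasurableSpace X] [BorelSpace X]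
variable {b : ℝ → ℝ}

lemma integrable_comp_bounded (hbc : Continuous b) (θ : Measure X) [IsFiniteMeasure θ]
    {g : X → ℝ} (hgm : AEMeasurable g θ) {n : ℝ} (hg : ∀ x, g x ∈ Set.Icc (-n) n) :
    Integrable (fun x => b (g x)) θ := by
  obtain ⟨C, hC⟩ := (isCompact_Icc (a := -n) (b := n)).exists_bound_of_continuousOn
    hbc.continuousOn
  refine Integrable.mono' (integrable_const C) (hbc.measurable.comp_aemeasurable hgm).aestronglyMeasurable
    (Filter.Eventually.of_forall fun x => ?_)
  exact hC _ (hg x)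

lemma bcf_mem_range (f : X →ᵇ ℝ) (x : X) : f x ∈ Set.Icc (-‖f‖) ‖f‖ := by
  have := f.norm_coe_le_norm x
  rw [Real.norm_eq_abs, abs_le] at this
  exact this

lemma sup_ge_measurable (θ μ : Measure X) [IsFiniteMeasure θ] [IsFiniteMeasure μ]
    (hbc : Continuous b) (hbconv : ConvexOn ℝ Set.univ b) (hbdiff : Differentiable ℝ b)
    (n : ℕ) (g : X → ℝ) (hgm : Measurable g) (hg : ∀ x, g x ∈ Set.Icc (-(n:ℝ)) n) :
    (((∫ x, g x ∂μ) - ∫ x, b (g x) ∂θ : ℝ) : EReal)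
      ≤ ⨆ f : X →ᵇ ℝ, (((∫ x, f x ∂μ) - ∫ x, b (f x) ∂θ : ℝ) : EReal) := by
  letI := TopologicalSpace.upgradeIsCompletelyMetrizable X
  apply ereal_le_iSup
  intro ε hε
  set L := max |deriv b (-(n:ℝ))| |deriv b n| with hL
  have hL0 : 0 ≤ L := le_trans (abs_nonneg _) (le_max_left _ _)
  set ε' := ε / (1 + L) with hε'
  have hε'pos : 0 < ε' := div_pos hε (by linarith)
  have hgbd : ∀ᵐ x ∂(μ + θ), ‖g x‖ ≤ (n:ℝ) := by
    refine Filter.Eventually.of_forall fun x => ?_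
    rw [Real.norm_eq_abs, abs_le]; exact hg x
  have hgint : Integrable g (μ + θ) :=
    Integrable.mono' (integrable_const (n:ℝ)) hgm.aestronglyMeasurable hgbd
  obtain ⟨f₀, hf₀, -⟩ := hgint.exists_boundedContinuous_integral_sub_le hε'pos
  set f : X →ᵇ ℝ := (f₀ ⊓ BoundedContinuousFunction.const X (n:ℝ)) ⊔
    BoundedContinuousFunction.const X (-(n:ℝ)) with hf
  have hfx : ∀ x, f x = max (min (f₀ x) (n:ℝ)) (-(n:ℝ)) := fun x => rfl
  have hfmem : ∀ x, f x ∈ Set.Icc (-(n:ℝ)) (n:ℝ) := by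
    intro x; rw [hfx]; exact clamp_mem (by positivity)
  have hclose : ∀ x, |f x - g x| ≤ ‖g x - f₀ x‖ := by
    intro x
    rw [Real.norm_eq_abs, abs_sub_comm (g x)]
    rw [hfx]; exact clamp_close (hg x)
  -- split the L¹ bound over μ and θ
  set D := fun x => ‖g x - f₀ x‖ with hD
  have hDint : Integrable D (μ + θ) := (hgint.sub (f₀.integrable _)).norm
  rw [integrable_add_measure] at hDint
  have hDsplit : ∫ x, D x ∂μ + ∫ x, D x ∂θ ≤ ε' := by
    rw [← integral_add_measure hDint.1 hDint.2]; exact hf₀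
  have hDμ : ∫ x, D x ∂μ ≤ ε' := by
    have := integral_nonneg (Pi.le_def.mpr fun x => norm_nonneg _ : 0 ≤ D) (μ := θ)
    linarith
  have hDθ : ∫ x, D x ∂θ ≤ ε' := by
    have := integral_nonneg (Pi.le_def.mpr fun x => norm_nonneg _ : 0 ≤ D) (μ := μ)
    linarith
  refine ⟨f, ?_⟩
  -- integrability facts
  have hfintμ : Integrable (fun x => f x) μ := f.integrable μ
  have hgintμ : Integrable g μ := (integrable_add_measure.mp hgint).1
  have hgintθ : Integrable g θ := (integrable_add_measure.mp hgint).2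
  have hbf : Integrable (fun x => b (f x)) θ :=
    integrable_comp_bounded hbc θ f.continuous.measurable.aemeasurable hfmem
  have hbg : Integrable (fun x => b (g x)) θ :=
    integrable_comp_bounded hbc θ hgm.aemeasurable hg
  -- first estimate
  have h1 : ∫ x, g x ∂μ - ∫ x, f x ∂μ ≤ ε' := by
    rw [← integral_sub hgintμ hfintμ]
    calc ∫ x, (g x - f x) ∂μ ≤ ∫ x, D x ∂μ := by
          refine integral_mono (hgintμ.sub hfintμ) hDint.1 fun x => ?_
          calc g x - f x ≤ |f x - g x| := by rw [abs_sub_comm]; exact le_abs_self _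
          _ ≤ D x := hclose x
    _ ≤ ε' := hDμ
  -- second estimate
  have h2 : ∫ x, b (f x) ∂θ - ∫ x, b (g x) ∂θ ≤ L * ε' := by
    rw [← integral_sub hbf hbg]
    calc ∫ x, (b (f x) - b (g x)) ∂θ ≤ ∫ x, L * D x ∂θ := by
          refine integral_mono (hbf.sub hbg) (hDint.2.const_mul L) fun x => ?_
          calc b (f x) - b (g x) ≤ |b (f x) - b (g x)| := le_abs_self _
          _ ≤ L * |f x - g x| := b_lip hbconv hbdiff n (hfmem x) (hg x)
          _ ≤ L * D x := by
                refine mul_le_mul_of_nonneg_left (hclose x) hL0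
    _ = L * ∫ x, D x ∂θ := integral_const_mul L _
    _ ≤ L * ε' := mul_le_mul_of_nonneg_left hDθ hL0
  have hεeq : ε' + L * ε' = ε := by
    rw [hε']; field_simp
  linarith
end meas

section core
variable {X : Type*} [TopologicalSpace X] [PolishSpace X] [MeasurableSpace X] [BorelSpace X]
variable {b : ℝ → ℝ}

lemma value_eq (θ μ : Measure X) [IsFiniteMeasure θ] [IsFiniteMeasure μ]
    (hμθ : μ ≪ θ) (hbc : Continuous b) (n : ℕ) :
    (∫ x, argmaxFn b hbc n ((μ.rnDeriv θ x).toReal) ∂μ)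
      - ∫ x, b (argmaxFn b hbc n ((μ.rnDeriv θ x).toReal)) ∂θ
      = ∫ x, phiFn b hbc n ((μ.rnDeriv θ x).toReal) ∂θ := by
  set ρ := fun x => (μ.rnDeriv θ x).toReal with hρ
  have hρm : Measurable ρ := (Measure.measurable_rnDeriv μ θ).ennreal_toReal
  have hρint : Integrable ρ θ := Measure.integrable_toReal_rnDeriv
  set g := fun x => argmaxFn b hbc n (ρ x) with hgdef
  have hgm : Measurable g := ((argmax_mono hbc n).measurable).comp hρm
  have hgmem : ∀ x, g x ∈ Set.Icc (-(n:ℝ)) n := fun x => argmax_mem hbc n (ρ x)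
  have hgbd : ∃ C, ∀ x, ‖g x‖ ≤ C := by
    refine ⟨n, fun x => ?_⟩
    rw [Real.norm_eq_abs, abs_le]; exact hgmem x
  have hgρint : Integrable (fun x => g x * ρ x) θ :=
    hρint.bdd_mul hgm.aestronglyMeasurable (ae_of_all _ hgbd.choose_spec)
  have hbgint : Integrable (fun x => b (g x)) θ :=
    integrable_comp_bounded hbc θ hgm.aemeasurable hgmem
  have h1 : ∫ x, g x ∂μ = ∫ x, g x * ρ x ∂θ := by
    rw [← MeasureTheory.integral_rnDeriv_smul hμθ (f := g)]
    congr 1; ext x; rw [smul_eq_mul, mul_comm]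
  rw [h1, ← integral_sub hgρint hbgint]
  rfl
end core

section core2
variable {X : Type*} [TopologicalSpace X] [PolishSpace X] [MeasurableSpace X] [BorelSpace X]
variable {b : ℝ → ℝ}

lemma young_integrated (θ μ : Measure X) [IsFiniteMeasure θ] [IsFiniteMeasure μ]
    (hμθ : μ ≪ θ) (hb0 : ∀ x, 0 ≤ b x) (hbc : Continuous b)
    (hbsl : Tendsto (fun x => b x / x) atTop atTop)
    (hbint : Integrable (fun x => betaConj b ((μ.rnDeriv θ x).toReal)) θ)
    (f : X →ᵇ ℝ) :
    (∫ x, f x ∂μ) - ∫ x, b (f x) ∂θ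
      ≤ ∫ x, betaConj b ((μ.rnDeriv θ x).toReal) ∂θ := by
  set ρ := fun x => (μ.rnDeriv θ x).toReal with hρ
  have hρm : Measurable ρ := (Measure.measurable_rnDeriv μ θ).ennreal_toReal
  have hρint : Integrable ρ θ := Measure.integrable_toReal_rnDeriv
  have hfρint : Integrable (fun x => f x * ρ x) θ :=
    hρint.bdd_mul f.continuous.measurable.aestronglyMeasurable
      (ae_of_all _ fun x => f.norm_coe_le_norm x)
  have hbfint : Integrable (fun x => b (f x)) θ :=
    integrable_comp_bounded hbc θ f.continuous.measurable.aemeasurable (bcf_mem_range f)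
  have h1 : ∫ x, f x ∂μ = ∫ x, f x * ρ x ∂θ := by
    rw [← MeasureTheory.integral_rnDeriv_smul hμθ (f := fun x => f x)]
    congr 1; ext x; rw [smul_eq_mul, mul_comm]
  rw [h1, ← integral_sub hfρint hbfint]
  refine integral_mono (hfρint.sub hbfint) hbint fun x => ?_
  exact conj_young hb0 hbsl ENNReal.toReal_nonneg (f x)
end core2

section part3
variable {X : Type*} [TopologicalSpace X] [PolishSpace X] [MeasurableSpace X] [BorelSpace X]
variable {b : ℝ → ℝ}

lemma sup_top_of_not_ac (θ μ : Measure X) [IsProbabilityMeasure θ] [IsProbabilityMeasure μ]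
    (hb0 : ∀ x, 0 ≤ b x) (hbc : Continuous b) (hbmono : Monotone b) (hμθ : ¬ μ ≪ θ) :
    (⨆ f : X →ᵇ ℝ, (((∫ x, f x ∂μ) - ∫ x, b (f x) ∂θ : ℝ) : EReal)) = ⊤ := by
  letI := TopologicalSpace.upgradeIsCompletelyMetrizable X
  obtain ⟨s, hθs, hμs⟩ : ∃ s, θ s = 0 ∧ μ s ≠ 0 := by
    by_contra h
    push_neg at h
    exact hμθ (Measure.AbsolutelyContinuous.mk fun s _ h0 => h s h0)
  set t := toMeasurable θ s with ht
  have hθt : θ t = 0 := by rwa [measure_toMeasurable]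
  have hμt : μ t ≠ 0 := fun h0 =>
    hμs (le_antisymm (le_trans (measure_mono (subset_toMeasurable θ s)) h0.le) (by simp))
  obtain ⟨K, hKt, hKcl, hKlt⟩ := (measurableSet_toMeasurable θ s).exists_isClosed_lt_add
    (measure_ne_top μ t) hμt
  have hμK : μ K ≠ 0 := by
    intro h0; rw [h0, zero_add] at hKlt; exact absurd hKlt (lt_irrefl _)
  have hθK : θ K = 0 := le_antisymm (le_trans (measure_mono hKt) hθt.le) (by simp)
  set m := (μ K).toReal with hm
  have hmpos : 0 < m := ENNReal.toReal_pos hμK (measure_ne_top μ K)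
  apply ereal_iSup_eq_top
  intro M
  set c := max ((M + b 0 + 1)/m) 0 with hc
  have hc0 : 0 ≤ c := le_max_right _ _
  have hcM : M + b 0 + 1 ≤ c * m := by
    have : (M + b 0 + 1)/m ≤ c := le_max_left _ _
    calc M + b 0 + 1 = ((M + b 0 + 1)/m) * m := by field_simp
    _ ≤ c * m := mul_le_mul_of_nonneg_right this hmpos.le
  have hεne : ENNReal.ofReal (1/(b c + 1)) ≠ 0 := by
    rw [Ne, ENNReal.ofReal_eq_zero, not_le]
    exact div_pos one_pos (by linarith [hb0 c])
  obtain ⟨U, hKU, hUo, hθU⟩ := Set.exists_isOpen_lt_add K (measure_ne_top θ K) hεne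
  rw [hθK, zero_add] at hθU
  have hθUr : (θ U).toReal ≤ 1/(b c + 1) :=
    ENNReal.toReal_le_of_le_ofReal (le_of_lt (div_pos one_pos (by linarith [hb0 c]))) hθU.le
  obtain ⟨f₀, hf₀U, hf₀K, hf₀01⟩ := exists_bounded_zero_one_of_closed
    (isClosed_compl_iff.mpr hUo) hKcl
    (Set.disjoint_left.mpr fun x hx hxK => hx (hKU hxK))
  refine ⟨c • f₀, ?_⟩
  have hfx : ∀ x, (c • f₀) x = c * f₀ x := fun x => rfl
  have hfmem : ∀ x, (c • f₀) x ∈ Set.Icc (-c) c := by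
    intro x
    rw [hfx]
    obtain ⟨h1, h2⟩ := hf₀01 x
    constructor
    · nlinarith
    · nlinarith
  have hμint : Integrable (fun x => (c • f₀) x) μ := (c • f₀).integrable μ
  have hKmeas : MeasurableSet K := hKcl.measurableSet
  have hUmeas : MeasurableSet U := hUo.measurableSet
  have h1 : c * m ≤ ∫ x, (c • f₀) x ∂μ := by
    have hind : ∫ x, K.indicator (fun _ => c) x ∂μ = m * c := by
      rw [integral_indicator_const c hKmeas]; simp [hm, smul_eq_mul, measureReal_def]
    rw [show c * m = m * c from mul_comm c m, ← hind]
    refine integral_mono ((integrable_const c).indicator hKmeas) hμint fun x => ?_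
    by_cases hx : x ∈ K
    · rw [Set.indicator_of_mem hx, hfx, hf₀K hx]; simp
    · rw [Set.indicator_of_notMem hx, hfx]
      have := (hf₀01 x).1; nlinarith
  have h2 : ∫ x, b ((c • f₀) x) ∂θ ≤ b 0 + 1 := by
    have hle : ∫ x, b ((c • f₀) x) ∂θ ≤ ∫ x, (b 0 + U.indicator (fun _ => b c) x) ∂θ := by
      refine integral_mono
        (integrable_comp_bounded hbc θ (c • f₀).continuous.measurable.aemeasurable hfmem)
        ((integrable_const (b 0)).add ((integrable_const (b c)).indicator hUmeas))
        fun x => ?_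
      by_cases hx : x ∈ U
      · rw [Set.indicator_of_mem hx]
        have hfc : (c • f₀) x ≤ c := (hfmem x).2
        have := hbmono hfc
        linarith [hb0 0]
      · have hxc : x ∈ Uᶜ := hx
        rw [Set.indicator_of_notMem hx, hfx, hf₀U hxc]
        simp
    have heq : ∫ x, (b 0 + U.indicator (fun _ => b c) x) ∂θ
        = b 0 + (θ U).toReal * b c := by
      rw [integral_add (integrable_const _) ((integrable_const (b c)).indicator hUmeas),
        integral_const, integral_indicator_const _ hUmeas]
      simp [smul_eq_mul, measureReal_def]
    have hbc1 : (θ U).toReal * b c ≤ 1 := by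
      calc (θ U).toReal * b c ≤ (1/(b c + 1)) * b c :=
            mul_le_mul_of_nonneg_right hθUr (hb0 c)
      _ ≤ 1 := by
            rw [div_mul_eq_mul_div, one_mul, div_le_one (by linarith [hb0 c])]
            linarith
    linarith
  linarith
end part3

lemma ereal_le_of_tendsto (S : EReal) (u : ℕ → ℝ) (R : ℝ)
    (hu : Tendsto u atTop (𝓝 R)) (h : ∀ n, (u n : EReal) ≤ S) : (R : EReal) ≤ S := by
  refine le_of_forall_lt fun w hw => ?_
  induction w with
  | bot => exact lt_of_lt_of_le (bot_lt_iff_ne_bot.mpr (by simp)) (h 0)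
  | coe r =>
    have hr : r < R := by exact_mod_cast hw
    obtain ⟨n, hn⟩ := (hu.eventually (eventually_gt_nhds hr)).exists
    exact lt_of_lt_of_le (by exact_mod_cast hn) (h n)
  | top => exact absurd hw (by simp)

section mct
variable {X : Type*} [TopologicalSpace X] [PolishSpace X] [MeasurableSpace X] [BorelSpace X]
variable {b : ℝ → ℝ}

lemma integrable_phi_comp (θ μ : Measure X) [IsFiniteMeasure θ] [IsFiniteMeasure μ]
    (hbc : Continuous b) (n : ℕ) :
    Integrable (fun x => phiFn b hbc n ((μ.rnDeriv θ x).toReal)) θ := by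
  set ρ := fun x => (μ.rnDeriv θ x).toReal with hρ
  have hρm : Measurable ρ := (Measure.measurable_rnDeriv μ θ).ennreal_toReal
  have hρint : Integrable ρ θ := Measure.integrable_toReal_rnDeriv
  obtain ⟨C, hC⟩ := (isCompact_Icc (a := -(n:ℝ)) (b := (n:ℝ))).exists_bound_of_continuousOn
    hbc.continuousOn
  refine Integrable.mono' ((hρint.const_mul (n:ℝ)).add (integrable_const C))
    ((phi_measurable hbc n).comp hρm).aestronglyMeasurable
    (Filter.Eventually.of_forall fun x => ?_)
  have hρ0 : 0 ≤ ρ x := ENNReal.toReal_nonneg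
  have hmem := argmax_mem hbc n (ρ x)
  have habs : |argmaxFn b hbc n (ρ x)| ≤ (n:ℝ) := abs_le.mpr hmem
  have hbabs : |b (argmaxFn b hbc n (ρ x))| ≤ C := by
    have := hC _ hmem
    rwa [Real.norm_eq_abs] at this
  rw [Real.norm_eq_abs]
  calc |phiFn b hbc n (ρ x)| ≤ |argmaxFn b hbc n (ρ x) * ρ x| + |b (argmaxFn b hbc n (ρ x))| :=
        abs_sub _ _
  _ ≤ (n:ℝ) * ρ x + C := by
      rw [abs_mul, abs_of_nonneg hρ0]
      exact add_le_add (mul_le_mul_of_nonneg_right habs hρ0) hbabs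

lemma mct_part1 (θ μ : Measure X) [IsFiniteMeasure θ] [IsFiniteMeasure μ]
    (hb0 : ∀ x, 0 ≤ b x) (hbc : Continuous b)
    (hbsl : Tendsto (fun x => b x / x) atTop atTop)
    (hbint : Integrable (fun x => betaConj b ((μ.rnDeriv θ x).toReal)) θ) :
    Tendsto (fun n => ∫ x, phiFn b hbc n ((μ.rnDeriv θ x).toReal) ∂θ) atTop
      (𝓝 (∫ x, betaConj b ((μ.rnDeriv θ x).toReal) ∂θ)) := by
  refine integral_tendsto_of_tendsto_of_monotone
    (fun n => integrable_phi_comp θ μ hbc n) hbint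
    (Filter.Eventually.of_forall fun x => phi_mono hbc _)
    (Filter.Eventually.of_forall fun x => phi_tendsto hbc hb0 hbsl ENNReal.toReal_nonneg)

lemma mct_part2 (θ μ : Measure X) [IsProbabilityMeasure θ] [IsFiniteMeasure μ]
    (hb0 : ∀ x, 0 ≤ b x) (hbc : Continuous b)
    (hbsl : Tendsto (fun x => b x / x) atTop atTop)
    (hbint : ¬ Integrable (fun x => betaConj b ((μ.rnDeriv θ x).toReal)) θ) (M : ℝ) :
    ∃ n, M ≤ ∫ x, phiFn b hbc n ((μ.rnDeriv θ x).toReal) ∂θ := by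
  set ρ := fun x => (μ.rnDeriv θ x).toReal with hρ
  have hρm : Measurable ρ := (Measure.measurable_rnDeriv μ θ).ennreal_toReal
  set c := b 0 with hcdef
  have hc0 : 0 ≤ c := hb0 0
  set u := fun (n : ℕ) (x : X) => ENNReal.ofReal (phiFn b hbc n (ρ x) + c) with hu
  have hphin : ∀ n x, 0 ≤ phiFn b hbc n (ρ x) + c := by
    intro n x; have := phi_lb hbc n (ρ x); linarith
  have hum : ∀ n, AEMeasurable (u n) θ :=
    fun n => (ENNReal.measurable_ofReal.comp
      (((phi_measurable hbc n).comp hρm).add_const c)).aemeasurable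
  have hconjm : Measurable (fun x => betaConj b (ρ x)) := by
    refine measurable_of_tendsto_metrizable
      (fun n => (phi_measurable hbc n).comp hρm) ?_
    rw [tendsto_pi_nhds]
    exact fun x => phi_tendsto hbc hb0 hbsl ENNReal.toReal_nonneg
  have hltop : Tendsto (fun n => ∫⁻ x, u n x ∂θ) atTop
      (𝓝 (∫⁻ x, ENNReal.ofReal (betaConj b (ρ x) + c) ∂θ)) := by
    refine lintegral_tendsto_of_tendsto_of_monotone hum
      (Filter.Eventually.of_forall fun x => ?_)
      (Filter.Eventually.of_forall fun x => ?_)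
    · intro i j hij
      exact ENNReal.ofReal_le_ofReal (by have := phi_mono hbc (ρ x) hij; linarith)
    · exact (ENNReal.continuous_ofReal.tendsto _).comp
        ((phi_tendsto hbc hb0 hbsl ENNReal.toReal_nonneg).add_const c)
  have htop : ∫⁻ x, ENNReal.ofReal (betaConj b (ρ x) + c) ∂θ = ⊤ := by
    by_contra hne
    apply hbint
    have hnn : (0 : X → ℝ) ≤ᵐ[θ] fun x => betaConj b (ρ x) + c := by
      refine Filter.Eventually.of_forall fun x => ?_
      have := conj_lb hb0 hbsl (ENNReal.toReal_nonneg (a := μ.rnDeriv θ x))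
      simp only [Pi.zero_apply]
      linarith
    have hint : Integrable (fun x => betaConj b (ρ x) + c) θ := by
      refine ⟨(hconjm.add_const c).aestronglyMeasurable, ?_⟩
      rw [hasFiniteIntegral_iff_ofReal hnn]
      exact lt_top_iff_ne_top.mpr hne
    exact (hint.sub (integrable_const c)).congr
      (Filter.Eventually.of_forall fun x => by simp; rfl)
  -- conclude
  set M' := max M 0 with hM'
  have hM'0 : 0 ≤ M' := le_max_right _ _
  have hev : ∀ᶠ n in atTop, ENNReal.ofReal (M' + c) < ∫⁻ x, u n x ∂θ := by
    refine (tendsto_order.1 hltop).1 _ ?_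
    rw [htop]
    exact lt_top_iff_ne_top.mpr ENNReal.ofReal_ne_top
  obtain ⟨n, hn⟩ := hev.exists
  refine ⟨n, ?_⟩
  have hφint : Integrable (fun x => phiFn b hbc n (ρ x)) θ := integrable_phi_comp θ μ hbc n
  have heq : ∫ x, (phiFn b hbc n (ρ x) + c) ∂θ = (∫⁻ x, u n x ∂θ).toReal := by
    rw [integral_eq_lintegral_of_nonneg_ae (Filter.Eventually.of_forall (hphin n))
      (hφint.add (integrable_const c)).aestronglyMeasurable]
  have hnn' : (0 : X → ℝ) ≤ᵐ[θ] fun x => phiFn b hbc n (ρ x) + c :=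
    Filter.Eventually.of_forall fun x => by simp only [Pi.zero_apply]; linarith [hphin n x]
  have hsum : Integrable (fun x => phiFn b hbc n (ρ x) + c) θ := by
    have h' := hφint.add (integrable_const c); exact h'
  have hfin : ∫⁻ x, u n x ∂θ ≠ ⊤ := by
    have h2 := hsum.hasFiniteIntegral
    rw [hasFiniteIntegral_iff_ofReal hnn'] at h2
    exact h2.ne
  have h3 : M' + c ≤ (∫⁻ x, u n x ∂θ).toReal := by
    have := ENNReal.toReal_mono hfin hn.le
    rwa [ENNReal.toReal_ofReal (by linarith)] at this
  have h4 : ∫ x, (phiFn b hbc n (ρ x) + c) ∂θ = (∫ x, phiFn b hbc n (ρ x) ∂θ) + c := by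
    rw [integral_add hφint (integrable_const c), integral_const]
    simp [measure_univ]
  have hM : M ≤ M' := le_max_left _ _
  have h5 : (∫ x, phiFn b hbc n (ρ x) ∂θ) + c = (∫⁻ x, u n x ∂θ).toReal := by
    rw [← h4, heq]
  linarith [h3, h5]
end mct

lemma ereal_eq_top_of_forall_le (S : EReal) (h : ∀ M : ℝ, (M : EReal) ≤ S) : S = ⊤ := by
  induction S with
  | bot => exact absurd (h 0) (by simp)
  | coe r =>
    exfalso
    have := h (r + 1)
    rw [EReal.coe_le_coe_iff] at this
    linarith
  | top => rfl


/-- The convex conjugate of `ψ_{θ,γ}(f) = ∫ β_γ(f) dθ` at a Borel probability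
measure `μ`, namely `ψ*_{θ,γ}(μ) = sup_{f ∈ C_b(X)} { ∫ f dμ - ∫ β_γ(f) dθ }`, equals
`∫ β*_γ(dμ/dθ) dθ` if `μ ≪ θ` (this being `+∞` when the integrand is not integrable),
and equals `+∞` if `μ` is not absolutely continuous with respect to `θ`. -/
theorem statement8 {X : Type*} [TopologicalSpace X] [PolishSpace X]
    [MeasurableSpace X] [BorelSpace X]
    (θ : Measure X) [IsProbabilityMeasure θ]
    (β : ℝ → ℝ) (hβ0 : ∀ x, 0 ≤ β x) (hβdiff : Differentiable ℝ β)
    (hβmono : Monotone β) (hβconv : ConvexOn ℝ Set.univ β)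
    (hβsl : Tendsto (fun x => β x / x) atTop atTop)
    (γ : ℝ) (hγ : 0 < γ)
    (μ : Measure X) [IsProbabilityMeasure μ] :
    (μ ≪ θ →
      Integrable (fun x => betaConj (fun t => β (γ * t) / γ) ((μ.rnDeriv θ x).toReal)) θ →
      (⨆ f : X →ᵇ ℝ, (((∫ x, f x ∂μ) - ∫ x, β (γ * f x) / γ ∂θ : ℝ) : EReal)) =
        ((∫ x, betaConj (fun t => β (γ * t) / γ) ((μ.rnDeriv θ x).toReal) ∂θ : ℝ) : EReal)) ∧
    (μ ≪ θ →
      ¬ Integrable (fun x => betaConj (fun t => β (γ * t) / γ) ((μ.rnDeriv θ x).toReal)) θ →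
      (⨆ f : X →ᵇ ℝ, (((∫ x, f x ∂μ) - ∫ x, β (γ * f x) / γ ∂θ : ℝ) : EReal)) = ⊤) ∧
    (¬ μ ≪ θ →
      (⨆ f : X →ᵇ ℝ, (((∫ x, f x ∂μ) - ∫ x, β (γ * f x) / γ ∂θ : ℝ) : EReal)) = ⊤) := by

  set b : ℝ → ℝ := fun t => β (γ * t) / γ with hbdef
  have hb0 : ∀ x, 0 ≤ b x := fun x => div_nonneg (hβ0 _) hγ.le
  have hbdiff : Differentiable ℝ b :=
    (hβdiff.comp ((differentiable_id).const_mul γ)).div_const γ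
  have hbc : Continuous b := hbdiff.continuous
  have hbmono : Monotone b := fun a a' h =>
    div_le_div_of_nonneg_right (hβmono (mul_le_mul_of_nonneg_left h hγ.le)) hγ.le
  have hbconv : ConvexOn ℝ Set.univ b := by
    refine ⟨convex_univ, fun x _ y _ a a' ha ha' hab => ?_⟩
    have h := hβconv.2 (Set.mem_univ (γ * x)) (Set.mem_univ (γ * y)) ha ha' hab
    simp only [smul_eq_mul] at h ⊢
    have h2 : γ * (a * x + a' * y) = a * (γ * x) + a' * (γ * y) := by ring
    calc β (γ * (a * x + a' * y)) / γ = β (a * (γ * x) + a' * (γ * y)) / γ := by rw [h2]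
    _ ≤ (a * β (γ * x) + a' * β (γ * y)) / γ := by
        apply div_le_div_of_nonneg_right h hγ.le
    _ = a * (β (γ * x) / γ) + a' * (β (γ * y) / γ) := by ring
  have hbsl : Tendsto (fun x => b x / x) atTop atTop := by
    have h1 : Tendsto (fun x : ℝ => γ * x) atTop atTop :=
      Filter.tendsto_id.const_mul_atTop hγ
    have h2 : Tendsto (fun x => β (γ * x) / (γ * x)) atTop atTop := hβsl.comp h1
    refine h2.congr' ?_
    filter_upwards [Filter.eventually_gt_atTop 0] with x hx
    rw [hbdef]
    field_simp
  set ρ := fun x => (μ.rnDeriv θ x).toReal with hρdef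
  have hρm : Measurable ρ := (Measure.measurable_rnDeriv μ θ).ennreal_toReal
  have key : ∀ (hac : μ ≪ θ) (n : ℕ),
      ((∫ x, phiFn b hbc n (ρ x) ∂θ : ℝ) : EReal)
        ≤ ⨆ f : X →ᵇ ℝ, (((∫ x, f x ∂μ) - ∫ x, b (f x) ∂θ : ℝ) : EReal) := by
    intro hac n
    rw [← value_eq θ μ hac hbc n]
    exact sup_ge_measurable θ μ hbc hbconv hbdiff n
      (fun x => argmaxFn b hbc n (ρ x))
      ((argmax_mono hbc n).measurable.comp hρm)
      (fun x => argmax_mem hbc n (ρ x))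
  refine ⟨?_, ?_, ?_⟩
  · intro hac hint
    apply le_antisymm
    · refine iSup_le fun f => ?_
      exact EReal.coe_le_coe_iff.mpr (young_integrated θ μ hac hb0 hbc hbsl hint f)
    · exact ereal_le_of_tendsto _ _ _ (mct_part1 θ μ hb0 hbc hbsl hint) (key hac)
  · intro hac hint
    refine ereal_eq_top_of_forall_le _ fun M => ?_
    obtain ⟨n, hn⟩ := mct_part2 θ μ hb0 hbc hbsl hint M
    exact le_trans (EReal.coe_le_coe_iff.mpr hn) (key hac n)
  · intro hac
    exact sup_top_of_not_ac θ μ hb0 hbc hbmono hac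
end

section
/- Let X be Polish, μ0 a Borel probability measure, and H^∞ a linear subspace of C_b(X) containing the constant functions which satisfies part (b) of Condition (D): for every ε > 0 and Borel probability measure μ there exist h″ ∈ H^∞ and a compact K ⊆ X with 1_{K^c} ≤ h″ and ∫ h″ dμ ≤ ε. Then the functional φ^∞(f) = inf{∫ h dμ0 : h ∈ H^∞, h ≥ f} is continuous from above on C_b(X): φ^∞(f_n) ↓ 0 for every sequence (f_n) in C_b(X) with f_n ↓ 0 pointwise. -/
open MeasureTheory BoundedContinuousFunction Filter Topology

/-!
On the compact set `K` of Condition (D)(b), Dini's theorem makes `f_n ≤ ε` for large `n`; off `K`,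
`f_n ≤ ‖f_0‖ ≤ ‖f_0‖ h''`. Hence `ε + ‖f_0‖ h'' ∈ H^∞` superhedges `f_n`, and its price
`ε + ‖f_0‖ ∫ h'' dμ0` is at most `ε (1 + ‖f_0‖)` once `h''` is chosen for `μ0`.
-/

section Superhedging

variable {X : Type*} [TopologicalSpace X] [MeasurableSpace X] {μ : Measure X} {H : Set (X →ᵇ ℝ)}

def superhedgingPrices (μ : Measure X) (H : Set (X →ᵇ ℝ)) (f : X →ᵇ ℝ) : Set ℝ :=
  {r : ℝ | ∃ h ∈ H, (∀ x, f x ≤ h x) ∧ r = ∫ x, h x ∂μ}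

lemma superhedgingPrices_nonempty (hconst : ∀ c : ℝ, const X c ∈ H) (f : X →ᵇ ℝ) :
    (superhedgingPrices μ H f).Nonempty :=
  ⟨_, const X ‖f‖, hconst _, fun x ↦ (le_abs_self _).trans (f.norm_coe_le_norm x), rfl⟩

variable [OpensMeasurableSpace X]

lemma integral_le_of_mem_superhedgingPrices [IsFiniteMeasure μ] {f : X →ᵇ ℝ} {r : ℝ}
    (hr : r ∈ superhedgingPrices μ H f) : ∫ x, f x ∂μ ≤ r := by
  obtain ⟨h, -, hfh, rfl⟩ := hr
  exact integral_mono (f.integrable μ) (h.integrable μ) hfh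

lemma bddBelow_superhedgingPrices [IsFiniteMeasure μ] (f : X →ᵇ ℝ) :
    BddBelow (superhedgingPrices μ H f) :=
  ⟨_, fun _ ↦ integral_le_of_mem_superhedgingPrices⟩

lemma phi_le_integral [IsFiniteMeasure μ] {f h : X →ᵇ ℝ} (hh : h ∈ H) (hfh : ∀ x, f x ≤ h x) :
    phi μ H f ≤ ∫ x, h x ∂μ :=
  csInf_le (bddBelow_superhedgingPrices f) ⟨h, hh, hfh, rfl⟩

lemma integral_le_phi [IsFiniteMeasure μ] (hconst : ∀ c : ℝ, const X c ∈ H) (f : X →ᵇ ℝ) :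
    ∫ x, f x ∂μ ≤ phi μ H f :=
  le_csInf (superhedgingPrices_nonempty hconst f) fun _ ↦ integral_le_of_mem_superhedgingPrices

lemma phi_mono_s10 [IsFiniteMeasure μ] (hconst : ∀ c : ℝ, const X c ∈ H) {f g : X →ᵇ ℝ}
    (hfg : ∀ x, f x ≤ g x) : phi μ H f ≤ phi μ H g := by
  refine csInf_le_csInf (bddBelow_superhedgingPrices f) (superhedgingPrices_nonempty hconst g) ?_
  rintro r ⟨h, hh, hgh, rfl⟩
  exact ⟨h, hh, fun x ↦ (hfg x).trans (hgh x), rfl⟩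

lemma phi_le_add_mul_integral [IsProbabilityMeasure μ]
    (hadd : ∀ g ∈ H, ∀ h ∈ H, g + h ∈ H) (hsmul : ∀ c : ℝ, ∀ h ∈ H, c • h ∈ H)
    (hconst : ∀ c : ℝ, const X c ∈ H) {f h : X →ᵇ ℝ} (hh : h ∈ H) {K : Set X}
    (hKh : ∀ x, Kᶜ.indicator (fun _ ↦ (1 : ℝ)) x ≤ h x) {ε M : ℝ} (hε : 0 ≤ ε) (hM : 0 ≤ M)
    (hfK : ∀ x ∈ K, f x ≤ ε) (hfM : ∀ x, f x ≤ M) :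
    phi μ H f ≤ ε + M * ∫ x, h x ∂μ := by
  have h_nonneg : ∀ x, 0 ≤ h x := fun x ↦
    (Set.indicator_nonneg (fun _ _ ↦ zero_le_one) x).trans (hKh x)
  have h_superhedge : ∀ x, f x ≤ (const X ε + M • h) x := by
    intro x
    change f x ≤ ε + M * h x
    by_cases hx : x ∈ K
    · nlinarith [hfK x hx, h_nonneg x]
    · have h_one : 1 ≤ h x := by simpa [Set.indicator_of_mem (Set.mem_compl hx)] using hKh x
      nlinarith [hfM x]
  calc phi μ H f ≤ ∫ x, (const X ε + M • h) x ∂μ :=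
        phi_le_integral (hadd _ (hconst ε) _ (hsmul M h hh)) h_superhedge
    _ = ε + M * ∫ x, h x ∂μ := by
        change ∫ x, (ε + M * h x) ∂μ = _
        rw [integral_add (integrable_const ε) ((h.integrable μ).const_mul M), integral_const,
          integral_const_mul, probReal_univ, one_smul]

end Superhedging

lemma eventually_forall_mem_le_of_isCompact {X ι : Type*} [TopologicalSpace X] [Preorder ι]
    {F : ι → X → ℝ} {K : Set X} (hK : IsCompact K) (hF_cont : ∀ i, Continuous (F i))
    (hF_anti : ∀ x, Antitone (F · x)) (hF_lim : ∀ x, Tendsto (F · x) atTop (𝓝 0))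
    {ε : ℝ} (hε : 0 < ε) :
    ∀ᶠ i in atTop, ∀ x ∈ K, F i x ≤ ε := by
  have h_unif : TendstoUniformlyOn F 0 atTop K :=
    Antitone.tendstoUniformlyOn_of_forall_tendsto hK (fun i ↦ (hF_cont i).continuousOn)
      (fun x _ ↦ hF_anti x) continuousOn_const (fun x _ ↦ hF_lim x)
  filter_upwards [Metric.tendstoUniformlyOn_iff.1 h_unif ε hε] with i hi x hx
  have hdist := hi x hx
  rw [Pi.zero_apply, dist_zero_left, Real.norm_eq_abs] at hdist
  exact (le_abs_self _).trans hdist.le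

theorem statement10_general {X : Type*} [TopologicalSpace X]
    [MeasurableSpace X] [BorelSpace X]
    (μ0 : Measure X) [IsProbabilityMeasure μ0]
    (Hinf : Set (X →ᵇ ℝ))
    (hadd : ∀ g ∈ Hinf, ∀ h ∈ Hinf, g + h ∈ Hinf)
    (hsmul : ∀ c : ℝ, ∀ h ∈ Hinf, c • h ∈ Hinf)
    (hconst : ∀ c : ℝ, BoundedContinuousFunction.const X c ∈ Hinf)
    (hD2 : ∀ ε > (0 : ℝ), ∀ μ : Measure X, IsProbabilityMeasure μ →
      ∃ h'' ∈ Hinf, ∃ K : Set X, IsCompact K ∧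
        (∀ x, Kᶜ.indicator (fun _ => (1 : ℝ)) x ≤ h'' x) ∧ ∫ x, h'' x ∂μ ≤ ε) :
    ∀ fn : ℕ → X →ᵇ ℝ, (∀ x, Antitone (fun n => fn n x)) →
      (∀ x, Tendsto (fun n => fn n x) atTop (𝓝 (0 : ℝ))) →
      Antitone (fun n => phi μ0 Hinf (fn n)) ∧
        Tendsto (fun n => phi μ0 Hinf (fn n)) atTop (𝓝 (0 : ℝ)) := by
  intro fn hanti htend
  set M := ‖fn 0‖
  have hfn_nonneg : ∀ n x, 0 ≤ fn n x := fun n x ↦ (hanti x).le_of_tendsto (htend x) n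
  have hphi_nonneg : ∀ n, 0 ≤ phi μ0 Hinf (fn n) := fun n ↦
    (integral_nonneg (hfn_nonneg n)).trans (integral_le_phi hconst (fn n))
  have hphi_small : ∀ ε > 0, ∀ᶠ n in atTop, phi μ0 Hinf (fn n) ≤ ε * (1 + M) := by
    intro ε hε
    obtain ⟨h, hh, K, hK, hKh, hint⟩ := hD2 ε hε μ0 inferInstance
    filter_upwards [eventually_forall_mem_le_of_isCompact hK (fun n ↦ (fn n).continuous)
      hanti htend hε] with n hn
    calc phi μ0 Hinf (fn n) ≤ ε + M * ∫ x, h x ∂μ0 :=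
          phi_le_add_mul_integral hadd hsmul hconst hh hKh hε.le (norm_nonneg _) hn
            fun x ↦ (hanti x (Nat.zero_le n)).trans ((fn 0).apply_le_norm x)
      _ ≤ ε * (1 + M) := by nlinarith [norm_nonneg (fn 0)]
  refine ⟨fun m n hmn ↦ phi_mono_s10 hconst fun x ↦ hanti x hmn, tendsto_order.2 ⟨?_, ?_⟩⟩
  · exact fun a ha ↦ Eventually.of_forall fun n ↦ ha.trans_le (hphi_nonneg n)
  · intro a ha
    have hM : 0 < 1 + M := by positivity
    have hδ : 0 < a / (2 * (1 + M)) := by positivity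
    filter_upwards [hphi_small _ hδ] with n hn
    calc phi μ0 Hinf (fn n) ≤ a / (2 * (1 + M)) * (1 + M) := hn
      _ = a / 2 := by field_simp [hM.ne']
      _ < a := half_lt_self ha

/-- If `H^∞ ⊆ C_b(X)` is a linear subspace containing the constants and
satisfying part (b) of Condition (D), then `φ^∞` is continuous from above:
`φ^∞(f_n) ↓ 0` for every sequence `f_n ↓ 0` pointwise in `C_b(X)`. -/
theorem statement10 {X : Type*} [TopologicalSpace X] [PolishSpace X]
    [MeasurableSpace X] [BorelSpace X]
    (μ0 : Measure X) [IsProbabilityMeasure μ0]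
    (Hinf : Set (X →ᵇ ℝ))
    (hadd : ∀ g ∈ Hinf, ∀ h ∈ Hinf, g + h ∈ Hinf)
    (hsmul : ∀ c : ℝ, ∀ h ∈ Hinf, c • h ∈ Hinf)
    (hconst : ∀ c : ℝ, BoundedContinuousFunction.const X c ∈ Hinf)
    (hD2 : ∀ ε > (0 : ℝ), ∀ μ : Measure X, IsProbabilityMeasure μ →
      ∃ h'' ∈ Hinf, ∃ K : Set X, IsCompact K ∧
        (∀ x, Kᶜ.indicator (fun _ => (1 : ℝ)) x ≤ h'' x) ∧ ∫ x, h'' x ∂μ ≤ ε) :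
    ∀ fn : ℕ → X →ᵇ ℝ, (∀ x, Antitone (fun n => fn n x)) →
      (∀ x, Tendsto (fun n => fn n x) atTop (𝓝 (0 : ℝ))) →
      Antitone (fun n => phi μ0 Hinf (fn n)) ∧
        Tendsto (fun n => phi μ0 Hinf (fn n)) atTop (𝓝 (0 : ℝ)) :=
  statement10_general μ0 Hinf hadd hsmul hconst hD2
end

section
/- Let σ : ℝ → ℝ be a continuous nondecreasing function with σ(x) → 0 as x → −∞ and σ(x) → 1 as x → +∞. Then for every ε > 0 and every c > 0 there exist real numbers a₁, b₁, a₂, b₂ such that the function g(x) = σ(a₁x + b₁) + σ(a₂x + b₂) satisfies g(x) ≤ ε for all x ∈ [−c, c] and g(x) ≥ 1 − ε for all x ∉ [−c−1, c+1]. -/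
/-!
Choose `M > 0` beyond which `σ` is within `ε/2` of its limits. The two ramps
`x ↦ ±2M x - 2M(c + 1/2)` are `≤ -M` on `[-c, c]`, so both terms are `≤ ε/2` there; for
`|x| ≥ c + 1` one of them is `≥ M`, so its term is `≥ 1 - ε/2`, and the other term is
nonnegative because a monotone function tending to `0` at `-∞` is nonnegative.
-/

open Filter Topology

theorem exists_pos_forall_le_of_tendsto_zero_one {f : ℝ → ℝ}
    (h0 : Tendsto f atBot (𝓝 0)) (h1 : Tendsto f atTop (𝓝 1)) {δ : ℝ} (hδ : 0 < δ) :
    ∃ M > 0, (∀ t ≤ -M, f t ≤ δ) ∧ (∀ t ≥ M, 1 - δ ≤ f t) := by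
  obtain ⟨A, hA⟩ := eventually_atBot.1 (h0.eventually (eventually_le_nhds hδ))
  obtain ⟨B, hB⟩ := eventually_atTop.1 (h1.eventually (eventually_ge_nhds (sub_lt_self 1 hδ)))
  have hAM : -A ≤ max 1 (max (-A) B) := (le_max_left _ _).trans (le_max_right _ _)
  have hBM : B ≤ max 1 (max (-A) B) := (le_max_right _ _).trans (le_max_right _ _)
  refine ⟨max 1 (max (-A) B), zero_lt_one.trans_le (le_max_left _ _), fun t ht => hA t ?_,
    fun t ht => hB t ?_⟩ <;> linarith

theorem ramp_le_neg_of_le {M c x : ℝ} (hM : 0 ≤ M) (hx : x ≤ c) :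
    2 * M * x + -(2 * M * (c + 1 / 2)) ≤ -M := by
  nlinarith

theorem le_ramp_of_add_one_le {M c x : ℝ} (hM : 0 ≤ M) (hx : c + 1 ≤ x) :
    M ≤ 2 * M * x + -(2 * M * (c + 1 / 2)) := by
  nlinarith

theorem statement13_general (σ : ℝ → ℝ) (hσm : Monotone σ)
    (hσ0 : Tendsto σ atBot (𝓝 (0 : ℝ))) (hσ1 : Tendsto σ atTop (𝓝 (1 : ℝ))) :
    ∀ ε > (0 : ℝ), ∀ c > (0 : ℝ), ∃ a₁ b₁ a₂ b₂ : ℝ,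
      (∀ x ∈ Set.Icc (-c) c, σ (a₁ * x + b₁) + σ (a₂ * x + b₂) ≤ ε) ∧
      (∀ x ∉ Set.Icc (-(c + 1)) (c + 1), 1 - ε ≤ σ (a₁ * x + b₁) + σ (a₂ * x + b₂)) := by
  intro ε hε c _
  obtain ⟨M, hM, hlow, hhigh⟩ := exists_pos_forall_le_of_tendsto_zero_one hσ0 hσ1 (half_pos hε)
  have hσnn : ∀ t, 0 ≤ σ t := hσm.le_of_tendsto hσ0
  refine ⟨2 * M, -(2 * M * (c + 1 / 2)), -(2 * M), -(2 * M * (c + 1 / 2)), ?_, ?_⟩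
  · rintro x ⟨hcx, hxc⟩
    rw [neg_mul_comm]
    linarith [hlow _ (ramp_le_neg_of_le hM.le hxc),
      hlow _ (ramp_le_neg_of_le hM.le (neg_le.1 hcx))]
  · intro x hx
    rw [neg_mul_comm]
    rcases not_and_or.1 (Set.mem_Icc.not.1 hx) with hx | hx
    · linarith [hhigh _ (le_ramp_of_add_one_le hM.le (le_neg.1 (not_le.1 hx).le)),
        hσnn (2 * M * x + -(2 * M * (c + 1 / 2)))]
    · linarith [hhigh _ (le_ramp_of_add_one_le hM.le (not_le.1 hx).le),
        hσnn (2 * M * -x + -(2 * M * (c + 1 / 2)))]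

/-- For a continuous nondecreasing activation `σ` with `σ → 0` at `−∞` and
`σ → 1` at `+∞`: for every `ε > 0` and `c > 0` there are parameters such that
`g(x) = σ(a₁x + b₁) + σ(a₂x + b₂)` satisfies `g ≤ ε` on `[−c, c]` and `g ≥ 1 − ε`
outside `[−c−1, c+1]`. -/
theorem statement13 (σ : ℝ → ℝ) (hσc : Continuous σ) (hσm : Monotone σ)
    (hσ0 : Tendsto σ atBot (𝓝 (0 : ℝ))) (hσ1 : Tendsto σ atTop (𝓝 (1 : ℝ))) :
    ∀ ε > (0 : ℝ), ∀ c > (0 : ℝ), ∃ a₁ b₁ a₂ b₂ : ℝ,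
      (∀ x ∈ Set.Icc (-c) c, σ (a₁ * x + b₁) + σ (a₂ * x + b₂) ≤ ε) ∧
      (∀ x ∉ Set.Icc (-(c + 1)) (c + 1), 1 - ε ≤ σ (a₁ * x + b₁) + σ (a₂ * x + b₂)) :=
  statement13_general σ hσm hσ0 hσ1
end

section
/- Let σ : ℝ → ℝ be continuous, nondecreasing, with σ(x) → 0 as x → −∞ and σ(x) → 1 as x → +∞, and let ν be a Borel probability measure on ℝ^d. Then for every ε > 0 there exist real numbers a_i, b_i, ā_i, b̄_i (i = 1,…,d) and a compact set K ⊆ ℝ^d such that the function h(x) = Σ_{i=1}^d [σ(a_i x_i + b_i) + σ(ā_i x_i + b̄_i)] + ε (a two-layer feedforward neural network with 2d hidden units plus a constant) satisfies 1_{K^c}(x) ≤ h(x) for all x ∈ ℝ^d and ∫ h dν ≤ 2ε. -/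
open MeasureTheory BoundedContinuousFunction Filter Topology

private lemma aux_int {d : ℕ} (ν : Measure (Fin d → ℝ)) [IsProbabilityMeasure ν]
    (g : (Fin d → ℝ) → ℝ) (hg : Continuous g) (hg0 : ∀ x, 0 ≤ g x) (hg1 : ∀ x, g x ≤ 1)
    (A : Set (Fin d → ℝ)) (hA : MeasurableSet A) (δ : ℝ) (hδ : 0 ≤ δ)
    (hsmall : ∀ x ∉ A, g x ≤ δ) (hνA : (ν A).toReal ≤ δ) :
    ∫ x, g x ∂ν ≤ 2 * δ := by
  have hgint : Integrable g ν :=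
    (integrable_const (1 : ℝ)).mono' hg.aestronglyMeasurable
      (ae_of_all _ fun x => by
        rw [Real.norm_eq_abs, abs_of_nonneg (hg0 x)]; exact hg1 x)
  have hind : Integrable (fun x => δ + A.indicator (fun _ => (1:ℝ)) x) ν :=
    (integrable_const δ).add ((integrable_const (1:ℝ)).indicator hA)
  have hle : ∀ x, g x ≤ δ + A.indicator (fun _ => (1:ℝ)) x := by
    intro x
    by_cases hx : x ∈ A
    · rw [Set.indicator_of_mem hx]
      linarith [hg1 x]
    · rw [Set.indicator_of_notMem hx]
      simpa using hsmall x hx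
  calc ∫ x, g x ∂ν ≤ ∫ x, (δ + A.indicator (fun _ => (1:ℝ)) x) ∂ν :=
        integral_mono hgint hind hle
    _ = δ + (ν A).toReal := by
        rw [integral_add (integrable_const δ) ((integrable_const (1:ℝ)).indicator hA),
          integral_const, integral_indicator_const _ hA]
        simp
        rfl
    _ ≤ 2 * δ := by linarith


/-- For a continuous nondecreasing activation `σ` with `σ → 0` at `−∞`,
`σ → 1` at `+∞`, and a Borel probability measure `ν` on `ℝ^d`: for every `ε > 0` there exist
parameters and a compact `K ⊆ ℝ^d` such that the two-layer network with `2d` hidden units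
`h(x) = Σ_i [σ(aᵢxᵢ + bᵢ) + σ(āᵢxᵢ + b̄ᵢ)] + ε` satisfies `1_{K^c} ≤ h` and `∫ h dν ≤ 2ε`. -/
theorem statement14 (σ : ℝ → ℝ) (hσc : Continuous σ) (hσm : Monotone σ)
    (hσ0 : Tendsto σ atBot (𝓝 (0 : ℝ))) (hσ1 : Tendsto σ atTop (𝓝 (1 : ℝ)))
    (d : ℕ) (ν : Measure (Fin d → ℝ)) [IsProbabilityMeasure ν] :
    ∀ ε > (0 : ℝ), ∃ (a b abar bbar : Fin d → ℝ) (K : Set (Fin d → ℝ)),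
      IsCompact K ∧
      (∀ x : Fin d → ℝ, Kᶜ.indicator (fun _ => (1 : ℝ)) x ≤
        (∑ i, (σ (a i * x i + b i) + σ (abar i * x i + bbar i))) + ε) ∧
      (∫ x, ((∑ i, (σ (a i * x i + b i) + σ (abar i * x i + bbar i))) + ε) ∂ν) ≤ 2 * ε := by
  intro ε hε
  -- σ is bounded between 0 and 1
  have hσ0' : ∀ t, 0 ≤ σ t := fun t =>
    le_of_tendsto hσ0 (eventually_atBot.2 ⟨t, fun u hu => hσm hu⟩)
  have hσ1' : ∀ t, σ t ≤ 1 := fun t =>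
    ge_of_tendsto hσ1 (eventually_atTop.2 ⟨t, fun u hu => hσm hu⟩)
  set δ : ℝ := ε / (4 * (d + 1)) with hδdef
  have hδpos : 0 < δ := by positivity
  -- threshold T : σ t ≥ 1 - ε for t ≥ T
  obtain ⟨T, hT⟩ : ∃ T : ℝ, ∀ t ≥ T, 1 - ε ≤ σ t := by
    have := hσ1.eventually (eventually_ge_nhds (show 1 - ε < 1 by linarith))
    exact eventually_atTop.1 this
  -- threshold T' : σ t ≤ δ for t ≤ T'
  obtain ⟨T', hT'⟩ : ∃ T' : ℝ, ∀ t ≤ T', σ t ≤ δ := by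
    have := hσ0.eventually (eventually_le_nhds hδpos)
    exact eventually_atBot.1 this
  -- tail sets
  set S : ℕ → Set (Fin d → ℝ) := fun n => ⋃ i, {x | (n : ℝ) < |x i|} with hSdef
  have hSopen : ∀ n, IsOpen (S n) := fun n =>
    isOpen_iUnion fun i => isOpen_lt continuous_const ((continuous_apply i).abs)
  have hSanti : Antitone S := by
    intro n m hnm x hx
    obtain ⟨i, hi⟩ := Set.mem_iUnion.1 hx
    exact Set.mem_iUnion.2 ⟨i, show (n:ℝ) < |x i| from
      lt_of_le_of_lt (Nat.cast_le.mpr hnm) hi⟩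
  have hSempty : ⋂ n, S n = ∅ := by
    ext x
    simp only [Set.mem_iInter, Set.mem_empty_iff_false, iff_false]
    intro hx
    obtain ⟨n, hn⟩ := exists_nat_gt (∑ i, |x i|)
    obtain ⟨i, hi⟩ := Set.mem_iUnion.1 (hx n)
    have : |x i| ≤ ∑ j, |x j| :=
      Finset.single_le_sum (fun j _ => abs_nonneg (x j)) (Finset.mem_univ i)
    simp only [Set.mem_setOf_eq] at hi
    linarith
  have htend : Tendsto (fun n => ν (S n)) atTop (𝓝 0) := by
    have := tendsto_measure_iInter_atTop (μ := ν)
      (fun n => ((hSopen n).measurableSet).nullMeasurableSet) hSanti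
      ⟨0, measure_ne_top ν _⟩
    rwa [hSempty, measure_empty] at this
  obtain ⟨N, hN⟩ : ∃ N : ℕ, ν (S N) ≤ ENNReal.ofReal δ := by
    have := htend.eventually (eventually_le_nhds
      (show (0 : ENNReal) < ENNReal.ofReal δ from ENNReal.ofReal_pos.mpr hδpos))
    exact (eventually_atTop.1 this).imp (fun N h => h N le_rfl)
  have hνS : (ν (S N)).toReal ≤ δ := ENNReal.toReal_le_of_le_ofReal hδpos.le hN
  -- shift
  set s : ℝ := (N : ℝ) + 1 - T' with hsdef
  have hMT := le_max_left T (0:ℝ)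
  refine ⟨fun _ => 1, fun _ => -s, fun _ => -1, fun _ => -s,
    Set.pi Set.univ (fun _ => Set.Icc (-(s + max T 0)) (s + max T 0)), ?_, ?_, ?_⟩
  · exact isCompact_univ_pi fun i => isCompact_Icc
  · intro x
    by_cases hx : x ∈ Set.pi Set.univ (fun _ => Set.Icc (-(s + max T 0)) (s + max T 0))
    · rw [Set.indicator_of_notMem (by simpa using hx)]
      have : (0:ℝ) ≤ ∑ i, (σ (1 * x i + -s) + σ (-1 * x i + -s)) :=
        Finset.sum_nonneg fun i _ => add_nonneg (hσ0' _) (hσ0' _)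
      linarith
    · rw [Set.indicator_of_mem (by simpa using hx)]
      rw [Set.mem_univ_pi] at hx
      push_neg at hx
      obtain ⟨i, hi⟩ := hx
      rw [Set.mem_Icc, not_and_or, not_le, not_le] at hi
      have hterm : 1 - ε ≤ σ (1 * x i + -s) + σ (-1 * x i + -s) := by
        rcases hi with h | h
        · have := hT (-1 * x i + -s) (by linarith)
          linarith [hσ0' (1 * x i + -s)]
        · have := hT (1 * x i + -s) (by linarith)
          linarith [hσ0' (-1 * x i + -s)]
      have hsum : σ (1 * x i + -s) + σ (-1 * x i + -s) ≤
          ∑ j, (σ (1 * x j + -s) + σ (-1 * x j + -s)) :=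
        Finset.single_le_sum (f := fun j => σ (1 * x j + -s) + σ (-1 * x j + -s))
          (fun j _ => add_nonneg (hσ0' _) (hσ0' _)) (Finset.mem_univ i)
      linarith
  · -- integral bound
    have hint : ∀ (c : ℝ) (i : Fin d),
        Integrable (fun x : Fin d → ℝ => σ (c * x i + -s)) ν := by
      intro c i
      have hc : Continuous fun x : Fin d → ℝ => σ (c * x i + -s) :=
        hσc.comp ((continuous_const.mul (continuous_apply i)).add continuous_const)
      exact (integrable_const (1:ℝ)).mono' hc.aestronglyMeasurable
        (ae_of_all _ fun x => by
          rw [Real.norm_eq_abs, abs_of_nonneg (hσ0' _)]; exact hσ1' _)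
    have key : ∀ (c : ℝ), |c| = 1 → ∀ i : Fin d,
        ∫ x, σ (c * x i + -s) ∂ν ≤ 2 * δ := by
      intro c hc i
      refine aux_int ν _
        (hσc.comp ((continuous_const.mul (continuous_apply i)).add continuous_const))
        (fun x => hσ0' _) (fun x => hσ1' _) (S N) (hSopen N).measurableSet δ hδpos.le
        (fun x hx => ?_) hνS
      have hxi : |x i| ≤ (N : ℝ) := by
        by_contra h
        exact hx (Set.mem_iUnion.2 ⟨i, by simpa using lt_of_not_ge h⟩)
      have : c * x i ≤ (N : ℝ) := by
        calc c * x i ≤ |c * x i| := le_abs_self _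
          _ = |c| * |x i| := abs_mul c (x i)
          _ = |x i| := by rw [hc, one_mul]
          _ ≤ (N : ℝ) := hxi
      exact hT' _ (by show c * x i + -s ≤ T'; simp only [hsdef] at *; linarith)
    have hsum_int : Integrable
        (fun x : Fin d → ℝ => ∑ i, (σ (1 * x i + -s) + σ (-1 * x i + -s))) ν :=
      integrable_finset_sum _ fun i _ => (hint 1 i).add (hint (-1) i)
    have hεconst : (∫ _ : Fin d → ℝ, ε ∂ν) = ε := by simp
    have hswap : (∫ (x : Fin d → ℝ), ∑ i, (σ (1 * x i + -s) + σ (-1 * x i + -s)) ∂ν)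
        = ∑ i, ∫ x, (σ (1 * x i + -s) + σ (-1 * x i + -s)) ∂ν :=
      integral_finset_sum (f := fun i (x : Fin d → ℝ) => σ (1 * x i + -s) + σ (-1 * x i + -s)) _
        (fun i _ => (hint 1 i).add (hint (-1) i))
    rw [integral_add hsum_int (integrable_const ε), hεconst, hswap]
    have hbound : ∑ i : Fin d,
        (∫ x, (σ (1 * x i + -s) + σ (-1 * x i + -s)) ∂ν) ≤ (d : ℝ) * (4 * δ) := by
      calc ∑ i : Fin d, (∫ x, (σ (1 * x i + -s) + σ (-1 * x i + -s)) ∂ν)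
          ≤ ∑ _i : Fin d, (4 * δ) := by
            refine Finset.sum_le_sum fun i _ => ?_
            rw [integral_add (hint 1 i) (hint (-1) i)]
            have h1 := key 1 (by norm_num) i
            have h2 := key (-1) (by norm_num) i
            linarith
        _ = (d : ℝ) * (4 * δ) := by
            rw [Finset.sum_const, Finset.card_univ, Fintype.card_fin, nsmul_eq_mul]
    have hd1 : (0:ℝ) < (d : ℝ) + 1 := by positivity
    have h4δ : (d : ℝ) * (4 * δ) ≤ ε := by
      rw [hδdef]
      rw [show (d:ℝ) * (4 * (ε / (4 * (↑d + 1)))) = ε * ((d:ℝ) / ((d:ℝ)+1)) by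
        field_simp]
      calc ε * ((d:ℝ) / ((d:ℝ)+1)) ≤ ε * 1 := by
            apply mul_le_mul_of_nonneg_left _ hε.le
            rw [div_le_one hd1]; linarith
        _ = ε := mul_one ε
    linarith
end

section
/- Let X = [0,1]², let θ be the uniform (normalized Lebesgue) distribution on [0,1]², let f(x₁,x₂) = −|x₁ − x₂|, and let β be a penalty function with β_γ(x) = β(γx)/γ for γ > 0. Then inf over h₁, h₂ ∈ C_b([0,1]) of { h₁(0) + h₂(0) + ∫_{[0,1]²} β_γ(f(x₁,x₂) − h₁(x₁) − h₂(x₂)) dθ(x₁,x₂) } = −∞; that is, the penalized optimal transport functional with marginals δ₀, δ₀ and uniform sampling measure takes the value −∞. -/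
open MeasureTheory BoundedContinuousFunction Filter Topology

set_option maxHeartbeats 1000000

/-- For the optimal transport setting on `X = [0,1]²` with both marginals
`δ₀` (so `∫ h dμ0 = h₁(0) + h₂(0)`), uniform sampling measure `θ` on `[0,1]²`,
`f(x₁,x₂) = −|x₁ − x₂|`, and any penalty function `β` with `β_γ(x) = β(γx)/γ`, the penalized
functional `inf_{h₁,h₂ ∈ C_b([0,1])} { h₁(0) + h₂(0) + ∫ β_γ(f − h₁ − h₂) dθ }` equals `−∞`:
the penalized values are unbounded below. -/
theorem statement18 (β : ℝ → ℝ) (hβ0 : ∀ x, 0 ≤ β x) (hβdiff : Differentiable ℝ β)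
    (hβmono : Monotone β) (hβconv : ConvexOn ℝ Set.univ β)
    (hβsl : Tendsto (fun x => β x / x) atTop atTop)
    (γ : ℝ) (hγ : 0 < γ) :
    ∀ c : ℝ, ∃ h₁ h₂ : BoundedContinuousFunction (Set.Icc (0 : ℝ) 1) ℝ,
      h₁ ⟨0, by norm_num⟩ + h₂ ⟨0, by norm_num⟩ +
        (∫ p : Set.Icc (0 : ℝ) 1 × Set.Icc (0 : ℝ) 1,
          β (γ * ((-|(p.1 : ℝ) - (p.2 : ℝ)|) - h₁ p.1 - h₂ p.2)) / γ
          ∂((volume : Measure (Set.Icc (0 : ℝ) 1)).prod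
              (volume : Measure (Set.Icc (0 : ℝ) 1)))) < c := by
  haveI : IsProbabilityMeasure (volume : Measure (Set.Icc (0:ℝ) 1)) :=
    inferInstanceAs (IsProbabilityMeasure (volume : Measure unitInterval))
  intro c
  have hβ00 : 0 ≤ β 0 := hβ0 0
  set K : ℝ := (β 0 + 2)/(2*γ) + (|c|+1)/2 with hKdef
  have hK : 0 < K := by positivity
  set M : ℝ := β (2*γ*K) with hMdef
  have hM0 : 0 ≤ M := hβ0 _
  set ε : ℝ := 1/(2*(1+M)) with hεdef
  have hε : 0 < ε := by positivity
  have hε1 : ε ≤ 1 := by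
    rw [hεdef]
    rw [div_le_one (by positivity)]
    nlinarith
  -- the function
  set φ : ℝ → ℝ := fun x => -K * max 0 (1 - x/ε) with hφdef
  have hφcont : Continuous φ := by
    apply Continuous.mul continuous_const
    exact Continuous.max continuous_const (by continuity)
  have hφ0 : φ 0 = -K := by simp [hφdef]
  have hφle0 : ∀ x : ℝ, φ x ≤ 0 := fun x => by
    have : (0:ℝ) ≤ max 0 (1 - x/ε) := le_max_left _ _
    simp only [hφdef]; nlinarith [mul_nonneg hK.le this]
  have hφgeK : ∀ x : ℝ, 0 ≤ x → -K ≤ φ x := fun x hx => by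
    have h1 : max 0 (1 - x/ε) ≤ 1 := by
      apply max_le (by norm_num)
      have : 0 ≤ x/ε := by positivity
      linarith
    simp only [hφdef]
    nlinarith [mul_le_mul_of_nonneg_left h1 hK.le]
  have hφzero : ∀ x : ℝ, ε ≤ x → φ x = 0 := fun x hx => by
    have : 1 - x/ε ≤ 0 := by
      rw [sub_nonpos, le_div_iff₀ hε]; linarith
    simp only [hφdef, max_eq_left this, mul_zero]
  set h : BoundedContinuousFunction (Set.Icc (0:ℝ) 1) ℝ :=
    BoundedContinuousFunction.mkOfCompact ⟨fun x => φ x, hφcont.comp continuous_subtype_val⟩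
    with hhdef
  have hh_apply : ∀ x : Set.Icc (0:ℝ) 1, h x = φ x := fun x => rfl
  refine ⟨h, h, ?_⟩
  have hh0 : h ⟨0, by norm_num⟩ = -K := by rw [hh_apply]; exact hφ0
  -- measures
  set μ : Measure (Set.Icc (0:ℝ) 1) := volume with hμdef
  set ν := μ.prod μ with hνdef
  -- the bad set
  set A : Set (Set.Icc (0:ℝ) 1) := Subtype.val ⁻¹' Set.Iic ε with hAdef
  have hAmeas : MeasurableSet A := measurable_subtype_coe measurableSet_Iic
  have hAvol : μ A = ENNReal.ofReal ε := by
    rw [hAdef, hμdef]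
    rw [volume_preimage_coe nullMeasurableSet_Icc measurableSet_Iic]
    have : Set.Iic ε ∩ Set.Icc (0:ℝ) 1 = Set.Icc 0 ε := by
      ext x
      simp only [Set.mem_inter_iff, Set.mem_Iic, Set.mem_Icc]
      constructor
      · rintro ⟨h1, h2, _⟩; exact ⟨h2, h1⟩
      · rintro ⟨h1, h2⟩; exact ⟨h2, h1, le_trans h2 hε1⟩
    rw [this, Real.volume_Icc, sub_zero]
  set S : Set (Set.Icc (0:ℝ) 1 × Set.Icc (0:ℝ) 1) := A ×ˢ Set.univ ∪ Set.univ ×ˢ A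
    with hSdef
  have hSmeas : MeasurableSet S :=
    (hAmeas.prod MeasurableSet.univ).union (MeasurableSet.univ.prod hAmeas)
  have hSvol : (ν S).toReal ≤ 2 * ε := by
    have h1 : ν S ≤ ENNReal.ofReal ε + ENNReal.ofReal ε := by
      refine le_trans (measure_union_le _ _) ?_
      rw [Measure.prod_prod, Measure.prod_prod, measure_univ, mul_one, one_mul, hAvol]
    rw [← ENNReal.ofReal_add hε.le hε.le] at h1
    have := ENNReal.toReal_le_of_le_ofReal (by linarith) h1
    linarith
  -- the integrand and the dominating function
  set g : Set.Icc (0:ℝ) 1 × Set.Icc (0:ℝ) 1 → ℝ :=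
    fun p => β (γ * ((-|(p.1 : ℝ) - (p.2 : ℝ)|) - h p.1 - h p.2)) / γ with hgdef
  set b : Set.Icc (0:ℝ) 1 × Set.Icc (0:ℝ) 1 → ℝ :=
    fun p => β 0 / γ + S.indicator (fun _ => M / γ) p with hbdef
  have hgb : ∀ p, g p ≤ b p := by
    intro p
    by_cases hp : p ∈ S
    · have harg : γ * ((-|(p.1 : ℝ) - (p.2 : ℝ)|) - h p.1 - h p.2) ≤ 2*γ*K := by
        have h1 : -K ≤ h p.1 := hφgeK _ p.1.2.1
        have h2 : -K ≤ h p.2 := hφgeK _ p.2.2.1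
        have h3 : -|(p.1 : ℝ) - (p.2 : ℝ)| ≤ 0 := neg_nonpos.2 (abs_nonneg _)
        nlinarith
      have : g p ≤ M / γ := by
        rw [hgdef]
        exact div_le_div_of_nonneg_right (hβmono harg) hγ.le
      rw [hbdef]
      simp only [Set.indicator_of_mem hp]
      have : β 0 / γ ≥ 0 := by positivity
      linarith [‹g p ≤ M / γ›]
    · have hx : ε < (p.1 : ℝ) := by
        by_contra hcon
        exact hp (Or.inl ⟨Set.mem_preimage.2 (le_of_not_gt hcon), Set.mem_univ _⟩)
      have hy : ε < (p.2 : ℝ) := by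
        by_contra hcon
        exact hp (Or.inr ⟨Set.mem_univ _, Set.mem_preimage.2 (le_of_not_gt hcon)⟩)
      have hx0 : h p.1 = 0 := by rw [hh_apply]; exact hφzero _ hx.le
      have hy0 : h p.2 = 0 := by rw [hh_apply]; exact hφzero _ hy.le
      have harg : γ * ((-|(p.1 : ℝ) - (p.2 : ℝ)|) - h p.1 - h p.2) ≤ 0 := by
        rw [hx0, hy0]
        have h3 : -|(p.1 : ℝ) - (p.2 : ℝ)| ≤ 0 := neg_nonpos.2 (abs_nonneg _)
        nlinarith
      rw [hbdef]
      simp only [Set.indicator_of_notMem hp, add_zero]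
      rw [hgdef]
      exact div_le_div_of_nonneg_right (hβmono harg) hγ.le
  -- integrability
  have hgcont : Continuous g := by
    apply Continuous.div_const
    apply hβdiff.continuous.comp
    apply Continuous.mul continuous_const
    apply Continuous.sub
    apply Continuous.sub
    · exact (continuous_abs.comp
        ((continuous_subtype_val.comp continuous_fst).sub
          (continuous_subtype_val.comp continuous_snd))).neg
    · exact h.continuous.comp continuous_fst
    · exact h.continuous.comp continuous_snd
  have hgint : Integrable g ν :=
    hgcont.integrable_of_hasCompactSupport (isClosed_tsupport _).isCompact
  have hbint : Integrable b ν :=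
    (integrable_const _).add ((integrable_const (M/γ)).indicator hSmeas)
  have hint_le : ∫ p, g p ∂ν ≤ ∫ p, b p ∂ν := integral_mono hgint hbint hgb
  have hbval : ∫ p, b p ∂ν = β 0 / γ + (ν S).toReal * (M / γ) := by
    rw [hbdef]
    rw [integral_add (integrable_const _) ((integrable_const (M/γ)).indicator hSmeas)]
    rw [integral_const, integral_indicator_const _ hSmeas]
    simp [smul_eq_mul, Measure.real]
  have hεM : 2 * ε * M ≤ 1 := by
    have h4 : 2 * ε * (1 + M) = 1 := by rw [hεdef]; field_simp
    nlinarith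
  have hbound : ∫ p, g p ∂ν ≤ β 0 / γ + 2 / γ := by
    refine hint_le.trans ?_
    rw [hbval]
    have h1 : (ν S).toReal * (M / γ) ≤ 2 * ε * (M / γ) := by
      apply mul_le_mul_of_nonneg_right hSvol (by positivity)
    have h2 : 2 * ε * (M / γ) ≤ 1 / γ := by
      have heq : 2 * ε * (M / γ) = (2 * ε * M) / γ := by ring
      rw [heq]
      exact div_le_div_of_nonneg_right hεM hγ.le
    have h3 : (1:ℝ)/γ ≤ 2/γ := by
      exact div_le_div_of_nonneg_right (by norm_num) hγ.le
    linarith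
  -- conclude
  have hfinal : -K + -K + (β 0 / γ + 2 / γ) < c := by
    have hγ' : (β 0 + 2)/(2*γ) + (β 0 + 2)/(2*γ) = β 0 / γ + 2 / γ := by
      field_simp; ring
    have habs : -|c| ≤ c := neg_abs_le c
    rw [hKdef]
    linarith
  calc h ⟨0, by norm_num⟩ + h ⟨0, by norm_num⟩ + ∫ p, g p ∂ν
      = -K + -K + ∫ p, g p ∂ν := by rw [hh0]
    _ ≤ -K + -K + (β 0 / γ + 2 / γ) := by linarith
    _ < c := hfinal
end
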